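/- arXiv:2307.02866 — 4 statements merged into one kernel-verified Lean document; each statement's English description precedes it below -/
import Mathlib

section
/- Let 1 ≤ k < n be integers and let ωₖ be the Lebesgue measure of the unit ball in ℝᵏ. There exists a positive integer ℓ with the following property: for any family 𝓕 of closed dyadic cubes of side length 2^(−ℓ) such that each unit dyadic cube contains at most one member of 𝓕, and for every x ∈ ℝⁿ and every k-dimensional linear subspace π of ℝⁿ, the set (x + π) ∩ closedBall(x, 1/2) is not contained in the union H = ⋃_{Q ∈ 𝓕} Q. -/
open MeasureTheory Metric Set Filter
open scoped NNReal ENNReal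

noncomputable section

abbrev Euc (n : ℕ) := EuclideanSpace ℝ (Fin n)

def dyadicCube (n : ℕ) (j : ℤ) (m : Fin n → ℤ) : Set (Euc n) :=
  {x : Euc n | ∀ i, (m i : ℝ) * 2 ^ (-j) ≤ x i ∧ x i ≤ ((m i : ℝ) + 1) * 2 ^ (-j)}

def IsDyadic {n : ℕ} (Q : Set (Euc n)) : Prop := ∃ j m, Q = dyadicCube n j m

def msupport {n : ℕ} (μ : Measure (Euc n)) : Set (Euc n) :=
  {x | ∀ U : Set (Euc n), IsOpen U → x ∈ U → 0 < μ U}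

def IsLipschitzGraph (n k : ℕ) (Γ : Set (Euc n)) : Prop :=
  ∃ (π : Submodule ℝ (Euc n)) (f : π → Euc n) (C : ℝ≥0),
    Module.finrank ℝ π = k ∧ LipschitzWith C f ∧ (∀ y, f y ∈ πᗮ) ∧
    Γ = Set.range (fun y : π => (y : Euc n) + f y)

def IsSparse (n : ℕ) (ℓ : ℕ) (E : Set (Euc n)) : Prop :=
  ∃ l : ℕ → ℤ, Tendsto l atTop atTop ∧
    ∀ j, ∃ sel : (Fin n → ℤ) → (Fin n → ℤ),
      (∀ m, dyadicCube n (l j + ℓ) (sel m) ⊆ dyadicCube n (l j) m) ∧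
      E ⊆ ⋃ m, dyadicCube n (l j + ℓ) (sel m)

def gaugeHausdorff (n : ℕ) (h : ℝ → ℝ) : Measure (Euc n) :=
  Measure.mkMetric (fun d => ENNReal.ofReal (h d.toReal))

def IsRectifiableSet (n k : ℕ) (S : Set (Euc n)) : Prop :=
  ∃ f : ℕ → (Euc k → Euc n),
    (∀ i, ∃ C : ℝ≥0, LipschitzWith C (f i)) ∧
    μH[(k:ℝ)] (S \ ⋃ i, Set.range (f i)) = 0

def HkSigmaFinite (n k : ℕ) (E : Set (Euc n)) : Prop :=
  ∃ F : ℕ → Set (Euc n), E ⊆ ⋃ i, F i ∧ ∀ i, μH[(k:ℝ)] (F i) < ⊤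


lemma dyadic_subset_unit (n : ℕ) (ℓ : ℕ) (m : Fin n → ℤ) :
    dyadicCube n (ℓ : ℤ) m ⊆ dyadicCube n 0 (fun c => m c / 2 ^ ℓ) := by
  intro x hx c
  obtain ⟨h1, h2⟩ := hx c
  have hp : (0:ℝ) < 2 ^ ℓ := by positivity
  have hdm : (2:ℤ) ^ ℓ * (m c / 2 ^ ℓ) + m c % 2 ^ ℓ = m c := Int.mul_ediv_add_emod _ _
  have hr0 : (0:ℤ) ≤ m c % 2 ^ ℓ := Int.emod_nonneg _ (by positivity)
  have hr1 : m c % 2 ^ ℓ < 2 ^ ℓ := Int.emod_lt_of_pos _ (by positivity)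
  have e1 : ((m c : ℝ)) = 2 ^ ℓ * (m c / 2 ^ ℓ : ℤ) + (m c % 2 ^ ℓ : ℤ) := by
    exact_mod_cast hdm.symm
  have hr0' : (0:ℝ) ≤ ((m c % 2 ^ ℓ : ℤ) : ℝ) := by exact_mod_cast hr0
  have hr1' : ((m c % 2 ^ ℓ : ℤ) : ℝ) + 1 ≤ 2 ^ ℓ := by exact_mod_cast hr1
  rw [zpow_neg, zpow_natCast] at h1 h2
  have hinv : (0:ℝ) < (2 ^ ℓ)⁻¹ := by positivity
  constructor
  · simp only [neg_zero, zpow_zero, mul_one]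
    have h3 : ((m c / 2 ^ ℓ : ℤ) : ℝ) * 2 ^ ℓ ≤ (m c : ℝ) := by nlinarith
    have h4 := mul_le_mul_of_nonneg_right h3 hinv.le
    rw [mul_assoc, mul_inv_cancel₀ hp.ne', mul_one] at h4
    linarith
  · simp only [neg_zero, zpow_zero, mul_one]
    have h3 : ((m c : ℝ) + 1) ≤ (((m c / 2 ^ ℓ : ℤ) : ℝ) + 1) * 2 ^ ℓ := by nlinarith
    have h4 := mul_le_mul_of_nonneg_right h3 hinv.le
    rw [mul_assoc, mul_inv_cancel₀ hp.ne', mul_one] at h4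
    linarith

lemma dist_le_of_mem_dyadic (n : ℕ) (j : ℤ) (m : Fin n → ℤ) {a b : Euc n}
    (ha : a ∈ dyadicCube n j m) (hb : b ∈ dyadicCube n j m) :
    dist a b ≤ Real.sqrt n * 2 ^ (-j) := by
  rw [EuclideanSpace.dist_eq]
  have h : ∀ i, dist (a i) (b i) ^ 2 ≤ ((2:ℝ) ^ (-j))^2 := by
    intro i
    obtain ⟨ha1, ha2⟩ := ha i
    obtain ⟨hb1, hb2⟩ := hb i
    have habs : |a i - b i| ≤ 2 ^ (-j) := by
      rw [abs_le]; constructor <;> nlinarith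
    have h0 : (0:ℝ) ≤ |a i - b i| := abs_nonneg _
    calc dist (a i) (b i) ^ 2 = |a i - b i| ^ 2 := by rw [Real.dist_eq]
      _ ≤ _ := by nlinarith
  calc Real.sqrt (∑ i, dist (a i) (b i) ^ 2)
      ≤ Real.sqrt (∑ _i : Fin n, ((2:ℝ) ^ (-j))^2) :=
        Real.sqrt_le_sqrt (Finset.sum_le_sum fun i _ => h i)
    _ = Real.sqrt ((n : ℝ) * ((2:ℝ) ^ (-j))^2) := by
        rw [Finset.sum_const]; simp [nsmul_eq_mul]
    _ = Real.sqrt n * 2 ^ (-j) := by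
        rw [Real.sqrt_mul (by positivity), Real.sqrt_sq (by positivity)]

lemma abs_coord_le_dist {n : ℕ} (a b : Euc n) (c : Fin n) : |a c - b c| ≤ dist a b := by
  rw [EuclideanSpace.dist_eq]
  rw [← Real.sqrt_sq_eq_abs]
  apply Real.sqrt_le_sqrt
  have := Finset.single_le_sum (f := fun i => dist (a i) (b i) ^ 2)
    (fun i _ => sq_nonneg _) (Finset.mem_univ c)
  simpa [Real.dist_eq, sq_abs] using this

/-- There is a positive integer ℓ such that for any family 𝓕 of dyadic
cubes of side length 2^(-ℓ), at most one per unit dyadic cube, and for every x and every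
k-dimensional subspace π, the disc (x+π) ∩ closedBall(x,1/2) is not contained in ⋃ 𝓕. -/
theorem stmt_1 (n k : ℕ) (hk : 1 ≤ k) (hkn : k < n) :
    ∃ ℓ : ℕ, 0 < ℓ ∧
      ∀ 𝓕 : Set (Set (Euc n)),
        (∀ Q ∈ 𝓕, ∃ m : Fin n → ℤ, Q = dyadicCube n (ℓ : ℤ) m) →
        (∀ m : Fin n → ℤ, ∀ Q ∈ 𝓕, ∀ Q' ∈ 𝓕,
          Q ⊆ dyadicCube n 0 m → Q' ⊆ dyadicCube n 0 m → Q = Q') →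
        ∀ (x : Euc n) (π : Submodule ℝ (Euc n)), Module.finrank ℝ π = k →
          ¬ ((fun v => x + v) '' (π : Set (Euc n)) ∩ closedBall x (1/2) ⊆ ⋃₀ 𝓕) := by
  obtain ⟨ℓ0, hℓ0⟩ := pow_unbounded_of_one_lt (R := ℝ) (2 * 3 ^ n * Real.sqrt n) one_lt_two
  refine ⟨ℓ0 + 1, Nat.succ_pos _, ?_⟩
  set ℓ : ℕ := ℓ0 + 1 with hℓdef
  intro 𝓕 hdy huniq x π hπ hsub
  have hp2 : (0:ℝ) < 2 ^ ℓ := by positivity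
  have hq3 : (0:ℝ) < 2 * 3 ^ n := by positivity
  have hkey : Real.sqrt n * (2:ℝ) ^ (-(ℓ:ℤ)) < 1 / (2 * 3 ^ n) := by
    have h2 : (2:ℝ) ^ ℓ0 ≤ 2 ^ ℓ := pow_le_pow_right₀ one_le_two (Nat.le_succ _)
    rw [zpow_neg, zpow_natCast, ← div_eq_mul_inv, div_lt_div_iff₀ hp2 hq3]
    nlinarith
  -- a unit vector in π
  have hne : π ≠ ⊥ := by
    intro h
    rw [h, finrank_bot] at hπ
    omega
  obtain ⟨v, hvπ, hv0⟩ := Submodule.exists_mem_ne_zero_of_ne_bot hne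
  set e : Euc n := (‖v‖⁻¹ : ℝ) • v with hedef
  have he1 : ‖e‖ = 1 := by
    rw [hedef, norm_smul, norm_inv, norm_norm, inv_mul_cancel₀ (norm_ne_zero_iff.mpr hv0)]
  have heπ : e ∈ π := π.smul_mem _ hvπ
  -- the points
  set N : ℕ := 3 ^ n with hNdef
  have hN0 : (0:ℝ) < 2 * N := by positivity
  set t : Fin (N + 1) → ℝ := fun i => (i : ℝ) / (2 * N) with htdef
  set p : Fin (N + 1) → Euc n := fun i => x + t i • e with hpdef
  have ht01 : ∀ i, 0 ≤ t i ∧ t i ≤ 1 / 2 := by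
    intro i
    constructor
    · positivity
    · rw [htdef, div_le_div_iff₀ hN0 two_pos]
      have : (i : ℕ) ≤ N := Nat.lt_succ_iff.mp i.isLt
      have : ((i : ℕ) : ℝ) ≤ (N : ℝ) := by exact_mod_cast this
      nlinarith
  have hpball : ∀ i, p i ∈ closedBall x (1/2) := by
    intro i
    rw [mem_closedBall, hpdef]
    simp only
    rw [dist_eq_norm, add_sub_cancel_left, norm_smul, he1, mul_one, Real.norm_eq_abs,
      abs_of_nonneg (ht01 i).1]
    exact (ht01 i).2
  have hpmem : ∀ i, p i ∈ (fun v => x + v) '' (π : Set (Euc n)) :=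
    fun i => ⟨t i • e, π.smul_mem _ heπ, rfl⟩
  have hdistp : ∀ i j : Fin (N+1), i ≠ j → 1 / (2 * N) ≤ dist (p i) (p j) := by
    intro i j hij
    rw [hpdef]
    simp only
    rw [dist_add_left, dist_eq_norm, ← sub_smul, norm_smul, he1, mul_one, Real.norm_eq_abs,
      htdef]
    simp only
    rw [div_sub_div_same, abs_div, abs_of_pos hN0, div_le_div_iff₀ hN0 hN0]
    have h1 : (1:ℝ) ≤ |(i : ℝ) - (j : ℝ)| := by
      have hne2 : (i:ℕ) ≠ (j:ℕ) := fun h => hij (Fin.ext h)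
      have hZ : (1:ℤ) ≤ |((i:ℕ):ℤ) - ((j:ℕ):ℤ)| := Int.one_le_abs (by omega)
      have : (1:ℝ) ≤ |((i:ℕ) : ℝ) - ((j:ℕ) : ℝ)| := by
        rw [show ((i:ℕ):ℝ) - ((j:ℕ):ℝ) = (((i:ℕ) - (j:ℕ) : ℤ) : ℝ) by push_cast; ring,
          ← Int.cast_abs]
        exact_mod_cast hZ
      exact this
    nlinarith
  -- choose cubes
  have hmem : ∀ i : Fin (N+1), ∃ m : Fin n → ℤ,
      dyadicCube n (ℓ:ℤ) m ∈ 𝓕 ∧ p i ∈ dyadicCube n (ℓ:ℤ) m := by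
    intro i
    obtain ⟨Q, hQ𝓕, hpQ⟩ := hsub ⟨hpmem i, hpball i⟩
    obtain ⟨m, hm⟩ := hdy Q hQ𝓕
    exact ⟨m, hm ▸ hQ𝓕, hm ▸ hpQ⟩
  choose m hm𝓕 hmp using hmem
  set f : Fin (N+1) → (Fin n → ℤ) := fun i c => m i c / 2 ^ ℓ with hfdef
  have hfsub : ∀ i, dyadicCube n (ℓ:ℤ) (m i) ⊆ dyadicCube n 0 (f i) :=
    fun i => dyadic_subset_unit n ℓ (m i)
  -- coordinate bounds for f
  set a : Fin n → ℤ := fun c => ⌈x c - 3/2⌉ with hadef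
  set b : Fin n → ℤ := fun c => ⌊x c + 1/2⌋ with hbdef
  have hcoordp : ∀ i c, x c - 1/2 ≤ p i c ∧ p i c ≤ x c + 1/2 := by
    intro i c
    have h1 := abs_coord_le_dist (p i) x c
    have h2 : dist (p i) x ≤ 1/2 := mem_closedBall.mp (hpball i)
    rw [abs_le] at h1
    constructor <;> linarith [h1.1, h1.2]
  have hfab : ∀ i c, a c ≤ f i c ∧ f i c ≤ b c := by
    intro i c
    have hu := hfsub i (hmp i) c
    simp only [neg_zero, zpow_zero, mul_one] at hu
    obtain ⟨hu1, hu2⟩ := hu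
    obtain ⟨hc1, hc2⟩ := hcoordp i c
    constructor
    · rw [hadef]
      exact Int.ceil_le.mpr (by linarith)
    · rw [hbdef]
      exact Int.le_floor.mpr (by linarith)
  -- injectivity
  have hinj : Function.Injective f := by
    intro i j hij
    by_contra hne'
    have hQeq : dyadicCube n (ℓ:ℤ) (m i) = dyadicCube n (ℓ:ℤ) (m j) :=
      huniq (f i) _ (hm𝓕 i) _ (hm𝓕 j) (hfsub i) (hij ▸ hfsub j)
    have hpj : p j ∈ dyadicCube n (ℓ:ℤ) (m i) := hQeq ▸ hmp j
    have hd := dist_le_of_mem_dyadic n (ℓ:ℤ) (m i) (hmp i) hpj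
    have := hdistp i j hne'
    have h3N : (1:ℝ) / (2 * N) = 1 / (2 * 3^n) := by
      rw [hNdef]; push_cast; ring_nf
    rw [h3N] at this
    linarith
  -- cardinality contradiction
  have hmaps : ∀ i ∈ (Finset.univ : Finset (Fin (N+1))), f i ∈ Finset.Icc a b := by
    intro i _
    rw [Finset.mem_Icc]
    exact ⟨fun c => (hfab i c).1, fun c => (hfab i c).2⟩
  have hcard := Finset.card_le_card_of_injOn f hmaps (hinj.injOn)
  have hIcc : (Finset.Icc a b).card ≤ 3 ^ n := by
    rw [Pi.card_Icc]
    calc ∏ c, (Finset.Icc (a c) (b c)).card ≤ 3 ^ (Finset.univ : Finset (Fin n)).card := by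
          apply Finset.prod_le_pow_card
          intro c _
          rw [Int.card_Icc]
          have hba : b c - a c ≤ 2 := by
            have h1 : (a c : ℝ) ≥ x c - 3/2 := Int.le_ceil _
            have h2 : (b c : ℝ) ≤ x c + 1/2 := Int.floor_le _
            have : (b c : ℝ) - a c ≤ 2 := by linarith
            exact_mod_cast this
          omega
      _ = 3 ^ n := by rw [Finset.card_univ, Fintype.card_fin]
  rw [Finset.card_univ, Fintype.card_fin] at hcard
  omega
end
end

section
/- Let 1 ≤ k < n be integers. There exist a positive integer ℓ and a constant c₀ ∈ (0, 1/2] with the following property: for every family 𝓕 of closed dyadic cubes of side length 2^(−ℓ) such that each unit dyadic cube contains at most one member of 𝓕, every x ∈ ℝⁿ, and every k-dimensional linear subspace π of ℝⁿ, there is a point y ∈ closedBall(x, 1/2) ∩ (x + π) with B(y, c₀) ∩ ⋃_{Q ∈ 𝓕} Q = ∅. -/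
open MeasureTheory Metric Set Filter
open scoped NNReal ENNReal

noncomputable section

lemma coord_dist_le {n : ℕ} (p q : Euc n) (i : Fin n) : dist (p i) (q i) ≤ dist p q := by
  rw [EuclideanSpace.dist_eq]
  have h1 : dist (p i) (q i) = Real.sqrt (dist (p i) (q i) ^ 2) := by
    rw [Real.sqrt_sq dist_nonneg]
  rw [h1]
  exact Real.sqrt_le_sqrt <|
    Finset.single_le_sum (f := fun j => dist (p j) (q j) ^ 2) (fun j _ => sq_nonneg _)
      (Finset.mem_univ i)

lemma cube_diam {n : ℕ} (j : ℤ) (m : Fin n → ℤ) {p q : Euc n}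
    (hp : p ∈ dyadicCube n j m) (hq : q ∈ dyadicCube n j m) :
    dist p q ≤ n * 2 ^ (-j) := by
  have hs : (0:ℝ) < 2 ^ (-j) := by positivity
  have hb : ∀ i, dist (p i) (q i) ≤ 2 ^ (-j) := by
    intro i
    obtain ⟨h1, h2⟩ := hp i
    obtain ⟨h3, h4⟩ := hq i
    have e1 : ((m i : ℝ) + 1) * 2 ^ (-j) = (m i : ℝ) * 2 ^ (-j) + 2 ^ (-j) := by ring
    rw [Real.dist_eq, abs_sub_le_iff]
    constructor <;> linarith [e1]
  rcases Nat.eq_zero_or_pos n with hn | hn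
  · subst hn
    have : p = q := PiLp.ext fun i => absurd i.2 (by simp)
    rw [this, dist_self]
    positivity
  have hn1 : (1:ℝ) ≤ n := by exact_mod_cast hn
  rw [EuclideanSpace.dist_eq]
  have h2 : ∑ i, dist (p i) (q i) ^ 2 ≤ (n : ℝ) * (2 ^ (-j)) ^ 2 := by
    calc ∑ i, dist (p i) (q i) ^ 2 ≤ ∑ _i : Fin n, (2 ^ (-j) : ℝ) ^ 2 :=
          Finset.sum_le_sum fun i _ => pow_le_pow_left₀ dist_nonneg (hb i) 2
      _ = (n : ℝ) * (2 ^ (-j)) ^ 2 := by simp [mul_comm]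
  calc Real.sqrt (∑ i, dist (p i) (q i) ^ 2) ≤ Real.sqrt ((n:ℝ) * (2 ^ (-j)) ^ 2) :=
        Real.sqrt_le_sqrt h2
    _ ≤ Real.sqrt (((n:ℝ) * 2 ^ (-j)) ^ 2) := by
        apply Real.sqrt_le_sqrt; nlinarith [sq_nonneg ((2:ℝ)^(-j))]
    _ = (n:ℝ) * 2 ^ (-j) := Real.sqrt_sq (by positivity)

lemma cube_subset_unit {n : ℕ} (L : ℕ) (m : Fin n → ℤ) :
    dyadicCube n (L : ℤ) m ⊆ dyadicCube n 0 (fun i => m i / 2 ^ L) := by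
  intro p hp i
  have hb : (0:ℤ) < 2 ^ L := by positivity
  obtain ⟨h1, h2⟩ := hp i
  set q : ℤ := m i / 2 ^ L with hqdef
  have hmod := Int.emod_add_mul_ediv (m i) (2 ^ L)
  have h0 := Int.emod_nonneg (m i) (by positivity : (2:ℤ) ^ L ≠ 0)
  have hlt := Int.emod_lt_of_pos (m i) hb
  have hq1 : q * 2 ^ L ≤ m i := by nlinarith
  have hq2 : m i + 1 ≤ (q + 1) * 2 ^ L := by nlinarith
  have hST : (2:ℝ) ^ (-(L:ℤ)) * (2:ℝ) ^ (L:ℤ) = 1 := by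
    rw [← zpow_add₀ (two_ne_zero)]; simp
  have hSpos : (0:ℝ) < 2 ^ (-(L:ℤ)) := by positivity
  have hq1' : (q:ℝ) * (2:ℝ) ^ (L:ℤ) ≤ (m i : ℝ) := by
    rw [zpow_natCast]; exact_mod_cast hq1
  have hq2' : (m i : ℝ) + 1 ≤ ((q:ℝ) + 1) * (2:ℝ) ^ (L:ℤ) := by
    rw [zpow_natCast]; exact_mod_cast hq2
  have key1 : (q:ℝ) ≤ (m i : ℝ) * 2 ^ (-(L:ℤ)) := by
    calc (q:ℝ) = ((q:ℝ) * 2 ^ (L:ℤ)) * 2 ^ (-(L:ℤ)) := by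
          rw [mul_assoc, mul_comm ((2:ℝ) ^ (L:ℤ)), hST, mul_one]
      _ ≤ (m i : ℝ) * 2 ^ (-(L:ℤ)) := mul_le_mul_of_nonneg_right hq1' hSpos.le
  have key2 : ((m i : ℝ) + 1) * 2 ^ (-(L:ℤ)) ≤ (q:ℝ) + 1 := by
    calc ((m i : ℝ) + 1) * 2 ^ (-(L:ℤ)) ≤ (((q:ℝ) + 1) * 2 ^ (L:ℤ)) * 2 ^ (-(L:ℤ)) :=
          mul_le_mul_of_nonneg_right hq2' hSpos.le
      _ = (q:ℝ) + 1 := by rw [mul_assoc, mul_comm ((2:ℝ) ^ (L:ℤ)), hST, mul_one]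
  constructor
  · show ((q:ℝ)) * 2 ^ (-(0:ℤ)) ≤ p i
    simp only [neg_zero, zpow_zero, mul_one]
    linarith
  · show p i ≤ ((q:ℝ) + 1) * 2 ^ (-(0:ℤ))
    simp only [neg_zero, zpow_zero, mul_one]
    linarith

/-- There are ℓ and c₀ ∈ (0, 1/2] such that for any family 𝓕 of dyadic
cubes of side length 2^(-ℓ), at most one per unit dyadic cube, every x and every
k-dimensional subspace π, some point y ∈ closedBall(x,1/2) ∩ (x+π) satisfies
B(y,c₀) ∩ ⋃ 𝓕 = ∅. -/
theorem stmt_2 (n k : ℕ) (hk : 1 ≤ k) (hkn : k < n) :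
    ∃ (ℓ : ℕ) (c₀ : ℝ), 0 < ℓ ∧ 0 < c₀ ∧ c₀ ≤ 1/2 ∧
      ∀ 𝓕 : Set (Set (Euc n)),
        (∀ Q ∈ 𝓕, ∃ m : Fin n → ℤ, Q = dyadicCube n (ℓ : ℤ) m) →
        (∀ m : Fin n → ℤ, ∀ Q ∈ 𝓕, ∀ Q' ∈ 𝓕,
          Q ⊆ dyadicCube n 0 m → Q' ⊆ dyadicCube n 0 m → Q = Q') →
        ∀ (x : Euc n) (π : Submodule ℝ (Euc n)), Module.finrank ℝ π = k →
          ∃ y ∈ closedBall x (1/2) ∩ (fun v => x + v) '' (π : Set (Euc n)),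
            ball y c₀ ∩ ⋃₀ 𝓕 = ∅ := by
  classical
  have hn : 1 ≤ n := by omega
  have h3pos : (0:ℝ) < 3 ^ n := by positivity
  have h31 : (1:ℝ) ≤ 3 ^ n := one_le_pow₀ (by norm_num)
  refine ⟨3*n+3, 1/(12*3^n), by omega, by positivity, ?_, ?_⟩
  · rw [div_le_div_iff₀ (by positivity) (by norm_num)]
    nlinarith
  intro 𝓕 hdy huniq x π hπ
  set L : ℕ := 3*n+3 with hLdef
  set c₀ : ℝ := 1/(12*3^n) with hc₀def
  set δ : ℝ := 1/(2*3^n) with hδdef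
  have hc₀pos : 0 < c₀ := by rw [hc₀def]; positivity
  have hδpos : 0 < δ := by rw [hδdef]; positivity
  have hc12 : c₀ ≤ 1/2 := by
    rw [hc₀def, div_le_div_iff₀ (by positivity) (by norm_num)]
    nlinarith
  -- key numeric inequality: 2*c₀ + n * 2^(-L) < δ
  have hnat : 6 * n * 3^n ≤ 2^(3*n+3) := by
    have h1 : n ≤ 2^n := Nat.le_of_lt (Nat.lt_two_pow_self)
    have h2 : 3^n ≤ 4^n := Nat.pow_le_pow_left (by norm_num) n
    calc 6*n*3^n ≤ 8 * 2^n * 4^n :=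
          Nat.mul_le_mul (Nat.mul_le_mul (by norm_num) h1) h2
      _ = 2^(3*n+3) := by
          have e4 : (4:ℕ)^n = 2^n * 2^n := by
            rw [show (4:ℕ) = 2*2 from rfl, mul_pow]
          rw [e4, pow_add, mul_comm 3 n, pow_mul]
          ring
  have hside : (n:ℝ) * 2 ^ (-(L:ℤ)) ≤ 1/(6*3^n) := by
    rw [zpow_neg, zpow_natCast, ← one_div, mul_one_div,
      div_le_div_iff₀ (by positivity) (by positivity)]
    have hcast : (6:ℝ) * n * 3^n ≤ 2^(3*n+3) := by exact_mod_cast hnat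
    rw [hLdef]
    nlinarith
  have hnum : 2*c₀ + (n:ℝ) * 2 ^ (-(L:ℤ)) < δ := by
    have e1 : 2 * c₀ = 1/(6*3^n) := by
      rw [hc₀def, mul_one_div, div_eq_div_iff (by positivity) (by positivity)]
      ring
    have e2 : (1:ℝ)/(6*3^n) + 1/(6*3^n) = 1/(3*3^n) := by
      rw [← add_div, div_eq_div_iff (by positivity) (by positivity)]
      ring
    have hlt : (1:ℝ)/(3*3^n) < 1/(2*3^n) := by
      apply one_div_lt_one_div_of_lt (by positivity)
      nlinarith
    rw [hδdef]
    linarith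
  -- unit vector in π
  have hne : π ≠ ⊥ := by
    intro h
    rw [h, finrank_bot] at hπ
    omega
  obtain ⟨v, hvπ, hv0⟩ := Submodule.exists_mem_ne_zero_of_ne_bot hne
  set e : Euc n := ‖v‖⁻¹ • v with he_def
  have he1 : ‖e‖ = 1 := by
    rw [he_def, norm_smul, norm_inv, norm_norm, inv_mul_cancel₀ (norm_ne_zero_iff.mpr hv0)]
  have heπ : e ∈ π := π.smul_mem _ hvπ
  by_contra hcon
  push_neg at hcon
  -- the points y j
  set y : Fin (3^n+1) → Euc n := fun j => x + (((j : ℕ) : ℝ) * δ) • e with hy_def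
  have hyx : ∀ j, dist (y j) x ≤ 1/2 := by
    intro j
    rw [hy_def]
    simp only
    rw [dist_self_add_left, norm_smul, he1, mul_one, Real.norm_eq_abs,
      abs_of_nonneg (by positivity)]
    have hj : ((j : ℕ) : ℝ) ≤ 3^n := by
      exact_mod_cast Nat.lt_succ_iff.mp j.2
    have h1 : ((j:ℕ):ℝ) * δ ≤ 3^n * δ := by nlinarith
    have h2 : (3:ℝ)^n * δ = 1/2 := by
      rw [hδdef, mul_one_div, div_eq_div_iff (by positivity) (by norm_num)]
      ring
    linarith
  have hymem : ∀ j, y j ∈ closedBall x (1/2) ∩ (fun v => x + v) '' (π : Set (Euc n)) := by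
    intro j
    exact ⟨mem_closedBall.mpr (hyx j), ⟨(((j:ℕ):ℝ) * δ) • e, π.smul_mem _ heπ, rfl⟩⟩
  have key : ∀ j : Fin (3^n+1), ∃ Q ∈ 𝓕, ∃ p ∈ Q, dist (y j) p < c₀ := by
    intro j
    obtain ⟨z, hz1, hz2⟩ := hcon (y j) (hymem j)
    obtain ⟨Q, hQ, hzQ⟩ := hz2
    exact ⟨Q, hQ, z, hzQ, by rw [dist_comm]; exact mem_ball.mp hz1⟩
  choose Q hQ𝓕 p hpQ hdist using key
  choose m hm using fun j => hdy (Q j) (hQ𝓕 j)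
  set M : Fin (3^n+1) → (Fin n → ℤ) := fun j i => m j i / 2 ^ L with hM_def
  have hsub : ∀ j, Q j ⊆ dyadicCube n 0 (M j) := by
    intro j
    rw [hm j]
    exact cube_subset_unit L (m j)
  -- injectivity
  have hMinj : Function.Injective M := by
    intro a b hab
    by_contra hne'
    have hQab : Q a = Q b := huniq (M a) (Q a) (hQ𝓕 a) (Q b) (hQ𝓕 b) (hsub a) (hab ▸ hsub b)
    have hpp : dist (p a) (p b) ≤ (n:ℝ) * 2 ^ (-(L:ℤ)) := by
      have h1 : p a ∈ dyadicCube n (L:ℤ) (m a) := by rw [← hm a]; exact hpQ a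
      have h2 : p b ∈ dyadicCube n (L:ℤ) (m a) := by rw [← hm a, hQab]; exact hpQ b
      exact cube_diam (L:ℤ) (m a) h1 h2
    have hyy : dist (y a) (y b) < δ := by
      calc dist (y a) (y b) ≤ dist (y a) (p a) + dist (p a) (p b) + dist (p b) (y b) :=
            dist_triangle4 _ _ _ _
        _ < c₀ + (n:ℝ) * 2 ^ (-(L:ℤ)) + c₀ := by
            have hb := hdist b
            rw [← dist_comm (p b)] at hb
            linarith [hdist a, hpp]
        _ < δ := by linarith [hnum]
    have hyy2 : δ ≤ dist (y a) (y b) := by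
      rw [hy_def]
      simp only
      rw [dist_add_left, dist_eq_norm, ← sub_smul, norm_smul, he1, mul_one, Real.norm_eq_abs,
        ← sub_mul, abs_mul, abs_of_nonneg hδpos.le]
      have hne'' : (a:ℕ) ≠ (b:ℕ) := fun h => hne' (Fin.ext h)
      have h1 : (1:ℝ) ≤ |((a:ℕ):ℝ) - ((b:ℕ):ℝ)| := by
        have e3 : ((a:ℕ):ℝ) - ((b:ℕ):ℝ) = ((((a:ℕ):ℤ) - ((b:ℕ):ℤ) : ℤ) : ℝ) := by
          push_cast; ring
        have h4 : ((a:ℕ):ℤ) - ((b:ℕ):ℤ) ≠ 0 := by omega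
        rw [e3, ← Int.cast_abs]
        exact_mod_cast Int.one_le_abs h4
      nlinarith [mul_le_mul_of_nonneg_right h1 hδpos.le]
    linarith
  -- counting
  have hMmem : ∀ j, M j ∈ Fintype.piFinset (fun i => Finset.Icc (⌊x i⌋ - 1) (⌊x i⌋ + 1)) := by
    intro j
    rw [Fintype.mem_piFinset]
    intro i
    have hpx : dist (p j) x < 1 := by
      calc dist (p j) x ≤ dist (p j) (y j) + dist (y j) x := dist_triangle _ _ _
        _ < c₀ + 1/2 := by
            have h := hdist j
            rw [dist_comm] at h
            linarith [hyx j]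
        _ ≤ 1 := by linarith
    have hco := coord_dist_le (p j) x i
    have hcube := hsub j (hpQ j) i
    simp only [neg_zero, zpow_zero, mul_one] at hcube
    obtain ⟨hl, hr⟩ := hcube
    have habs : |p j i - x i| < 1 := lt_of_le_of_lt (by rw [← Real.dist_eq]; exact hco) hpx
    rw [abs_lt] at habs
    rw [Finset.mem_Icc]
    constructor
    · have h2 : (⌊x i⌋ : ℝ) - 2 < (M j i : ℝ) := by
        have := Int.floor_le (x i)
        linarith
      have h3 : ⌊x i⌋ - 2 < M j i := by exact_mod_cast h2
      omega
    · have h2 : (M j i : ℝ) - 1 ≤ x i := by linarith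
      have h3 : M j i - 1 ≤ ⌊x i⌋ := Int.le_floor.mpr (by push_cast; linarith)
      omega
  have hcard := Finset.card_le_card_of_injOn (s := Finset.univ) M (fun j _ => hMmem j)
    (fun a _ b _ h => hMinj h)
  rw [Finset.card_univ, Fintype.card_fin, Fintype.card_piFinset] at hcard
  have hicc : ∀ i : Fin n, (Finset.Icc (⌊x i⌋ - 1) (⌊x i⌋ + 1)).card = 3 := by
    intro i
    rw [Int.card_Icc]
    omega
  rw [Finset.prod_congr rfl (fun i _ => hicc i)] at hcard
  simp only [Finset.prod_const, Finset.card_univ, Fintype.card_fin] at hcard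
  omega
end
end

section
/- Let h : [0,∞) → [0,∞) be continuous increasing with h(0) = 0 and lim_{r→0} h(r)/rᵏ = 0 for an integer 1 ≤ k < n. Let μ be a nontrivial Radon measure on ℝⁿ with μ(Q) ≤ h(diam Q) for every dyadic cube Q. Then for every positive integer ℓ there exists a nontrivial Radon measure ν on ℝⁿ such that: (a) ν(Q) ≤ (diam Q)ᵏ for every dyadic cube Q; (b) supp(ν) ⊆ supp(μ); (c) supp(ν) is ℓ-sparse. -/
open MeasureTheory Metric Set Filter
open scoped NNReal ENNReal

noncomputable section

namespace Sparse9

/-- half-open dyadic cube, in normalized form -/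
def co (n : ℕ) (T : ℤ) (m : Fin n → ℤ) : Set (Euc n) :=
  {x : Euc n | ∀ i, (m i : ℝ) ≤ x i * 2 ^ T ∧ x i * 2 ^ T < (m i : ℝ) + 1}

lemma co_subset_dyadic {n : ℕ} (T : ℤ) (m : Fin n → ℤ) : co n T m ⊆ dyadicCube n T m := by
  intro x hx i
  have h2 : (0:ℝ) < 2 ^ T := by positivity
  obtain ⟨h1, h2'⟩ := hx i
  constructor
  · rw [zpow_neg]
    have h1' : (m i : ℝ) / 2 ^ T ≤ x i := by
      rw [div_le_iff₀ h2]; linarith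
    calc (m i : ℝ) * (2 ^ T)⁻¹ = (m i : ℝ) / 2 ^ T := by ring
      _ ≤ x i := h1'
  · rw [zpow_neg]
    have : x i ≤ ((m i : ℝ) + 1) / 2 ^ T := by
      rw [le_div_iff₀ h2]; linarith
    calc x i ≤ ((m i : ℝ) + 1) / 2 ^ T := this
      _ = ((m i : ℝ) + 1) * (2 ^ T)⁻¹ := by ring

lemma measurableSet_co {n : ℕ} (T : ℤ) (m : Fin n → ℤ) : MeasurableSet (co n T m) := by
  have : co n T m = ⋂ i, {x : Euc n | (m i : ℝ) ≤ x i * 2 ^ T ∧ x i * 2 ^ T < (m i : ℝ) + 1} := by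
    ext x; simp [co, Set.mem_iInter]
  rw [this]
  refine MeasurableSet.iInter fun i => ?_
  have hm : Measurable fun x : Euc n => x i * (2:ℝ) ^ T :=
    (by fun_prop : Continuous fun x : Euc n => x i).measurable.mul_const _
  exact (measurableSet_le measurable_const hm).inter (measurableSet_lt hm measurable_const)

lemma isClosed_dyadicCube {n : ℕ} (T : ℤ) (m : Fin n → ℤ) : IsClosed (dyadicCube n T m) := by
  have : dyadicCube n T m =
      ⋂ i, ((fun x : Euc n => x i) ⁻¹' Icc ((m i : ℝ) * 2 ^ (-T)) (((m i : ℝ) + 1) * 2 ^ (-T))) := by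
    ext x; simp [dyadicCube, Set.mem_iInter, Icc]
  rw [this]
  exact isClosed_iInter fun i =>
    IsClosed.preimage (by fun_prop : Continuous fun x : Euc n => x i) isClosed_Icc

lemma measurableSet_dyadicCube {n : ℕ} (T : ℤ) (m : Fin n → ℤ) :
    MeasurableSet (dyadicCube n T m) := (isClosed_dyadicCube T m).measurableSet

/-- child index -/
def child {n : ℕ} (B : ℕ) (m : Fin n → ℤ) (e : Fin n → Fin B) : Fin n → ℤ :=
  fun i => B * m i + e i

/-- ancestor index -/
def anc {n : ℕ} (B : ℕ) (m' : Fin n → ℤ) : Fin n → ℤ := fun i => (m' i) / B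

def off {n : ℕ} (B : ℕ) [NeZero B] (m' : Fin n → ℤ) : Fin n → Fin B := fun i =>
  ⟨((m' i) % B).toNat, by
    have hB : (0:ℤ) < B := by exact_mod_cast Nat.pos_of_ne_zero (NeZero.ne B)
    have h1 : 0 ≤ (m' i) % B := Int.emod_nonneg _ (ne_of_gt hB)
    have h2 : (m' i) % B < B := Int.emod_lt_of_pos _ hB
    omega⟩

lemma anc_child {n : ℕ} (B : ℕ) [NeZero B] (m : Fin n → ℤ) (e : Fin n → Fin B) :
    anc B (child B m e) = m := by
  funext i
  have hB : (0:ℤ) < B := by exact_mod_cast Nat.pos_of_ne_zero (NeZero.ne B)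
  have he : (0:ℤ) ≤ (e i : ℤ) := Int.ofNat_nonneg _
  have he2 : ((e i : ℤ)) < B := by exact_mod_cast (e i).2
  simp only [anc, child]
  have hBz : (B:ℤ) ≠ 0 := ne_of_gt hB
  rw [add_comm, Int.add_mul_ediv_left _ _ hBz, Int.ediv_eq_zero_of_lt he he2, zero_add]

lemma off_child {n : ℕ} (B : ℕ) [NeZero B] (m : Fin n → ℤ) (e : Fin n → Fin B) :
    off B (child B m e) = e := by
  funext i
  have hB : (0:ℤ) < B := by exact_mod_cast Nat.pos_of_ne_zero (NeZero.ne B)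
  have he2 : ((e i : ℤ)) < B := by exact_mod_cast (e i).2
  have : (child B m e i) % B = (e i : ℤ) := by
    simp only [child]
    rw [add_comm, Int.add_mul_emod_self_left, Int.emod_eq_of_lt (Int.ofNat_nonneg _) he2]
  simp only [off, this]
  ext
  simp

lemma child_anc_off {n : ℕ} (B : ℕ) [NeZero B] (m' : Fin n → ℤ) :
    child B (anc B m') (off B m') = m' := by
  funext i
  have hB : (0:ℤ) < B := by exact_mod_cast Nat.pos_of_ne_zero (NeZero.ne B)
  have h1 : 0 ≤ (m' i) % B := Int.emod_nonneg _ (ne_of_gt hB)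
  have h2 : (m' i) % B < B := Int.emod_lt_of_pos _ hB
  simp only [child, anc, off]
  have : ((⟨((m' i) % B).toNat, by omega⟩ : Fin B) : ℤ) = (m' i) % B := by
    simp [Int.toNat_of_nonneg h1]
  rw [this]
  exact Int.mul_ediv_add_emod (m' i) B

end Sparse9

namespace Sparse9

lemma two_zpow_add (T : ℤ) (d : ℕ) : (2:ℝ) ^ (T + (d:ℤ)) = 2 ^ T * 2 ^ d := by
  rw [zpow_add₀ (by norm_num : (2:ℝ) ≠ 0), zpow_natCast]

/-- cubes at the same scale are pairwise disjoint -/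
lemma co_disjoint {n : ℕ} (T : ℤ) {m m' : Fin n → ℤ} (hmm : m ≠ m') :
    co n T m ∩ co n T m' = ∅ := by
  by_contra hne
  obtain ⟨x, hx1, hx2⟩ := Set.nonempty_iff_ne_empty.2 hne
  apply hmm
  funext i
  obtain ⟨a1, a2⟩ := hx1 i
  obtain ⟨b1, b2⟩ := hx2 i
  have h1 : (m i : ℝ) < m' i + 1 := lt_of_le_of_lt b1 a2 |> fun _ => lt_of_le_of_lt a1 b2
  have h2 : (m' i : ℝ) < m i + 1 := lt_of_le_of_lt b1 a2
  have h1' : (m i) < m' i + 1 := by exact_mod_cast h1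
  have h2' : (m' i) < m i + 1 := by exact_mod_cast h2
  omega

lemma mem_co_child_iff {n : ℕ} (T : ℤ) (d : ℕ) (m : Fin n → ℤ) (e : Fin n → Fin (2^d))
    (x : Euc n) : x ∈ co n (T + d) (child (2^d) m e) ↔
      ∀ i, ((2:ℝ)^d * m i + (e i : ℕ)) ≤ (x i * 2 ^ T) * 2 ^ d
        ∧ (x i * 2 ^ T) * 2 ^ d < (2:ℝ)^d * m i + (e i : ℕ) + 1 := by
  have hch : ∀ i, ((child (2^d) m e i : ℤ) : ℝ) = (2:ℝ) ^ d * m i + (e i : ℕ) := by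
    intro i; simp only [child]; push_cast; ring
  constructor
  · intro hx i
    obtain ⟨h1, h2⟩ := hx i
    rw [two_zpow_add, ← mul_assoc, hch i] at h1 h2
    exact ⟨h1, h2⟩
  · intro hx i
    obtain ⟨h1, h2⟩ := hx i
    rw [two_zpow_add, ← mul_assoc, hch i]
    exact ⟨h1, h2⟩

/-- a child cube is inside its parent cube -/
lemma co_child_subset {n : ℕ} (T : ℤ) (d : ℕ) (m : Fin n → ℤ) (e : Fin n → Fin (2^d)) :
    co n (T + d) (child (2^d) m e) ⊆ co n T m := by
  intro x hx
  rw [mem_co_child_iff] at hx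
  intro i
  obtain ⟨h1, h2⟩ := hx i
  have hBpos : (0:ℝ) < 2 ^ d := by positivity
  have he0 : (0:ℝ) ≤ (e i : ℕ) := by positivity
  have he1 : ((e i : ℕ) : ℝ) + 1 ≤ (2:ℝ) ^ d := by
    have : ((e i : ℕ)) + 1 ≤ 2^d := (e i).2
    exact_mod_cast this
  constructor
  · nlinarith
  · nlinarith

/-- partition of a cube into its children at depth d -/
lemma co_eq_iUnion_children {n : ℕ} (T : ℤ) (d : ℕ) (m : Fin n → ℤ) :
    co n T m = ⋃ e : Fin n → Fin (2^d), co n (T + d) (child (2^d) m e) := by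
  apply Set.Subset.antisymm
  · intro x hx
    have hBpos : (0:ℝ) < 2 ^ d := by positivity
    have key : ∀ i, ∃ ei : Fin (2^d), ((2:ℝ)^d * m i + (ei : ℕ)) ≤ (x i * 2 ^ T) * 2 ^ d
        ∧ (x i * 2 ^ T) * 2 ^ d < (2:ℝ)^d * m i + (ei : ℕ) + 1 := by
      intro i
      obtain ⟨h1, h2⟩ := hx i
      set y : ℝ := (x i * 2 ^ T) * 2 ^ d with hy
      have h2n : ((2^d : ℕ) : ℝ) = (2:ℝ)^d := by push_cast; ring
      have hk1 : ((2^d : ℕ) : ℝ) * m i ≤ y := by rw [h2n, hy]; nlinarith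
      have hk2 : y < ((2^d : ℕ) : ℝ) * (m i + 1) := by rw [h2n, hy]; nlinarith
      have hfl : (2:ℤ)^d * m i ≤ ⌊y⌋ := by
        apply Int.le_floor.2; push_cast; push_cast at hk1; linarith
      have h4 : ⌊y⌋ < (2:ℤ)^d * m i + 2^d := by
        have hfy : (⌊y⌋ : ℝ) ≤ y := Int.floor_le y
        have h3 : (⌊y⌋ : ℝ) < ((2:ℝ)^d) * m i + 2^d := by
          rw [h2n] at hk2; nlinarith
        exact_mod_cast h3
      set z : ℤ := ⌊y⌋ - (2:ℤ)^d * m i with hz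
      have hz0 : 0 ≤ z := by rw [hz]; linarith
      have hz1 : z < ((2^d : ℕ) : ℤ) := by
        have : z < (2:ℤ)^d := by rw [hz]; linarith
        exact_mod_cast this
      have hzn : z.toNat < 2^d := by omega
      refine ⟨⟨z.toNat, hzn⟩, ?_, ?_⟩
      all_goals
        have h5 : (((⟨z.toNat, hzn⟩ : Fin (2^d)) : ℕ) : ℝ) = (z:ℝ) := by
          have hnn := Int.toNat_of_nonneg hz0
          show ((z.toNat : ℕ) : ℝ) = (z:ℝ)
          exact_mod_cast hnn
        rw [h5]
        have heq : ((2:ℤ)^d * m i + z : ℤ) = ⌊y⌋ := by rw [hz]; ring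
        have heqR : (2:ℝ)^d * (m i : ℝ) + (z:ℝ) = (⌊y⌋ : ℝ) := by
          rw [← heq]; push_cast; ring
        rw [heqR]
      · exact Int.floor_le y
      · linarith [Int.lt_floor_add_one y]
    choose ei h1 h2 using key
    exact Set.mem_iUnion.2 ⟨ei, (mem_co_child_iff T d m ei x).2 fun i => ⟨h1 i, h2 i⟩⟩
  · exact Set.iUnion_subset fun e => co_child_subset T d m e

lemma co_anc_subset {n : ℕ} (T : ℤ) (d : ℕ) (m' : Fin n → ℤ) :
    co n (T + d) m' ⊆ co n T (anc (2^d) m') := by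
  haveI : NeZero (2^d) := ⟨Nat.pos_iff_ne_zero.1 (Nat.pos_of_ne_zero (by positivity))⟩
  have := co_child_subset T d (anc (2^d) m') (off (2^d) m')
  rwa [child_anc_off] at this

end Sparse9

namespace Sparse9

lemma child_inj_e {n : ℕ} (B : ℕ) [NeZero B] (m : Fin n → ℤ) {e e' : Fin n → Fin B}
    (h : child B m e = child B m e') : e = e' := by
  have := congrArg (off B) h
  rwa [off_child, off_child] at this

lemma measure_co_eq_sum {n : ℕ} (μ : Measure (Euc n)) (T : ℤ) (d : ℕ) (m : Fin n → ℤ) :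
    μ (co n T m) = ∑ e : Fin n → Fin (2^d), μ (co n (T + d) (child (2^d) m e)) := by
  haveI : NeZero (2^d) := ⟨Nat.pos_iff_ne_zero.1 (Nat.pos_of_ne_zero (by positivity))⟩
  rw [co_eq_iUnion_children T d m, measure_iUnion, tsum_fintype]
  · intro e e' hee
    rw [Function.onFun, Set.disjoint_iff_inter_eq_empty]
    exact co_disjoint _ (fun hch => hee (child_inj_e _ _ hch))
  · exact fun e => measurableSet_co _ _

/-- corner point of a dyadic cube -/
def pt (n : ℕ) (T : ℤ) (m : Fin n → ℤ) : Euc n :=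
  (WithLp.equiv 2 (Fin n → ℝ)).symm (fun i => (m i : ℝ) * 2 ^ (-T))

lemma pt_apply {n : ℕ} (T : ℤ) (m : Fin n → ℤ) (i : Fin n) :
    pt n T m i = (m i : ℝ) * 2 ^ (-T) := rfl

lemma pt_mem_co {n : ℕ} (T : ℤ) (m : Fin n → ℤ) : pt n T m ∈ co n T m := by
  intro i
  rw [pt_apply]
  have h2 : ((2:ℝ) ^ (-T)) * 2 ^ T = 1 := by
    rw [← zpow_add₀ (by norm_num : (2:ℝ) ≠ 0)]; simp
  constructor
  · rw [mul_assoc, h2, mul_one]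
  · rw [mul_assoc, h2, mul_one]; linarith

lemma dist_coord_le {n : ℕ} (x y : Euc n) (i : Fin n) : |x i - y i| ≤ dist x y := by
  rw [EuclideanSpace.dist_eq]
  have h1 : |x i - y i| = Real.sqrt ((x i - y i)^2) := by
    rw [Real.sqrt_sq_eq_abs]
  rw [h1]
  apply Real.sqrt_le_sqrt
  have : dist (x i) (y i) ^ 2 = (x i - y i)^2 := by
    rw [Real.dist_eq, sq_abs]
  rw [← this]
  exact Finset.single_le_sum (fun j _ => sq_nonneg (dist (x j) (y j))) (Finset.mem_univ i)

lemma dist_le_of_mem_dyadic {n : ℕ} (T : ℤ) (m : Fin n → ℤ) {x y : Euc n}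
    (hx : x ∈ dyadicCube n T m) (hy : y ∈ dyadicCube n T m) :
    dist x y ≤ Real.sqrt n * 2 ^ (-T) := by
  rw [EuclideanSpace.dist_eq]
  have hcoord : ∀ i, dist (x i) (y i) ^ 2 ≤ (2 ^ (-T) : ℝ)^2 := by
    intro i
    obtain ⟨a1, a2⟩ := hx i
    obtain ⟨b1, b2⟩ := hy i
    rw [Real.dist_eq, sq_abs]
    have h1 : |x i - y i| ≤ 2 ^ (-T) := by
      rw [abs_sub_le_iff]; constructor <;> nlinarith
    calc (x i - y i)^2 = |x i - y i|^2 := by rw [sq_abs]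
      _ ≤ (2 ^ (-T) : ℝ)^2 := by
          apply pow_le_pow_left₀ (abs_nonneg _) h1
  have hsum : (∑ i, dist (x i) (y i) ^ 2) ≤ (n : ℝ) * (2 ^ (-T) : ℝ)^2 := by
    calc (∑ i, dist (x i) (y i) ^ 2) ≤ ∑ _i : Fin n, (2 ^ (-T) : ℝ)^2 :=
            Finset.sum_le_sum (fun i _ => hcoord i)
      _ = (n : ℝ) * (2 ^ (-T) : ℝ)^2 := by
          rw [Finset.sum_const, Finset.card_univ, Fintype.card_fin, nsmul_eq_mul]
  calc Real.sqrt (∑ i, dist (x i) (y i) ^ 2) ≤ Real.sqrt ((n : ℝ) * (2 ^ (-T) : ℝ)^2) :=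
        Real.sqrt_le_sqrt hsum
    _ = Real.sqrt n * 2 ^ (-T) := by
        rw [Real.sqrt_mul (by positivity), Real.sqrt_sq (by positivity)]

lemma isBounded_dyadicCube {n : ℕ} (T : ℤ) (m : Fin n → ℤ) :
    Bornology.IsBounded (dyadicCube n T m) := by
  rw [Metric.isBounded_iff]
  exact ⟨Real.sqrt n * 2 ^ (-T), fun x hx y hy => dist_le_of_mem_dyadic T m hx hy⟩

lemma diam_dyadic_le {n : ℕ} (T : ℤ) (m : Fin n → ℤ) :
    Metric.diam (dyadicCube n T m) ≤ Real.sqrt n * 2 ^ (-T) :=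
  Metric.diam_le_of_forall_dist_le (by positivity) (fun x hx y hy => dist_le_of_mem_dyadic T m hx hy)

lemma diam_dyadic_ge {n : ℕ} (T : ℤ) (m : Fin n → ℤ) :
    Real.sqrt n * 2 ^ (-T) ≤ Metric.diam (dyadicCube n T m) := by
  have h1 : pt n T m ∈ dyadicCube n T m := co_subset_dyadic T m (pt_mem_co T m)
  have h2 : pt n T (fun i => m i + 1) ∈ dyadicCube n T m := by
    intro i
    rw [pt_apply]
    push_cast
    have h2T : (0:ℝ) < 2 ^ (-T) := by positivity
    constructor <;> nlinarith
  have hd : dist (pt n T m) (pt n T (fun i => m i + 1)) = Real.sqrt n * 2 ^ (-T) := by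
    rw [EuclideanSpace.dist_eq]
    have : ∀ i : Fin n, dist (pt n T m i) (pt n T (fun i => m i + 1) i) ^ 2
        = (2 ^ (-T) : ℝ)^2 := by
      intro i
      rw [pt_apply, pt_apply, Real.dist_eq]
      push_cast
      have : (m i : ℝ) * 2 ^ (-T) - ((m i : ℝ) + 1) * 2 ^ (-T) = -(2 ^ (-T)) := by ring
      rw [this, abs_neg, abs_of_pos (by positivity : (0:ℝ) < (2:ℝ) ^ (-T))]
    rw [Finset.sum_congr rfl (fun i _ => this i), Finset.sum_const, Finset.card_univ,
      Fintype.card_fin, nsmul_eq_mul, Real.sqrt_mul (by positivity), Real.sqrt_sq (by positivity)]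
  rw [← hd]
  exact Metric.dist_le_diam_of_mem (isBounded_dyadicCube T m) h1 h2

end Sparse9

namespace Sparse9

section Prefix
variable {ι : Type*} [Fintype ι] [DecidableEq ι] (κ : ι → ℕ) (w : ι → ℝ)

open Finset

/-- prefix sum w.r.t. an injective key -/
def pfx (i : ι) : ℝ := ∑ i' ∈ univ.filter (fun i' => κ i' < κ i), w i'

variable {κ w}

lemma pfx_nonneg (hw : ∀ i, 0 ≤ w i) (i : ι) : 0 ≤ pfx κ w i :=
  Finset.sum_nonneg (fun i' _ => hw i')

lemma pfx_add_le (hw : ∀ i, 0 ≤ w i) {i i'' : ι} (hk : κ i < κ i'') :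
    pfx κ w i + w i ≤ pfx κ w i'' := by
  have hni : i ∉ univ.filter (fun i' => κ i' < κ i) := by simp
  have : pfx κ w i + w i = ∑ i' ∈ insert i (univ.filter (fun i' => κ i' < κ i)), w i' := by
    rw [Finset.sum_insert hni, pfx]; ring
  rw [this]
  apply Finset.sum_le_sum_of_subset_of_nonneg
  · intro x hx
    simp only [Finset.mem_insert, Finset.mem_filter, Finset.mem_univ, true_and] at hx ⊢
    rcases hx with rfl | hx
    · exact hk
    · omega
  · exact fun x _ _ => hw x

lemma pfx_add_le_tot (hw : ∀ i, 0 ≤ w i) (i : ι) : pfx κ w i + w i ≤ ∑ i', w i' := by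
  have hni : i ∉ univ.filter (fun i' => κ i' < κ i) := by simp
  have : pfx κ w i + w i = ∑ i' ∈ insert i (univ.filter (fun i' => κ i' < κ i)), w i' := by
    rw [Finset.sum_insert hni, pfx]; ring
  rw [this]
  exact Finset.sum_le_sum_of_subset_of_nonneg (fun x _ => Finset.mem_univ x)
    (fun x _ _ => hw x)

lemma pfx_cover (hκ : Function.Injective κ) (hw : ∀ i, 0 ≤ w i) {A t : ℝ}
    (h1 : A ≤ t) (h2 : t < A + ∑ i', w i') :
    ∃ i, A + pfx κ w i ≤ t ∧ t < A + pfx κ w i + w i := by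
  classical
  have hne : Nonempty ι := by
    by_contra hempty
    rw [not_nonempty_iff] at hempty
    rw [Finset.sum_of_isEmpty] at h2
    linarith
  obtain ⟨i₀, -, hmin⟩ := Finset.exists_min_image univ κ ⟨Classical.arbitrary ι, mem_univ _⟩
  have hS : (univ.filter (fun i => A + pfx κ w i ≤ t)).Nonempty := by
    refine ⟨i₀, Finset.mem_filter.2 ⟨mem_univ _, ?_⟩⟩
    have : univ.filter (fun i' => κ i' < κ i₀) = ∅ := by
      apply Finset.filter_eq_empty_iff.2
      intro x _
      exact not_lt.2 (hmin x (mem_univ x))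
    rw [pfx, this, Finset.sum_empty, add_zero]
    exact h1
  obtain ⟨i, hiS, himax⟩ := Finset.exists_max_image _ κ hS
  rw [Finset.mem_filter] at hiS
  refine ⟨i, hiS.2, ?_⟩
  by_contra hcon
  push_neg at hcon
  set U := univ.filter (fun i'' => κ i < κ i'') with hU
  rcases Finset.eq_empty_or_nonempty U with hUe | hUn
  · -- i has maximal key overall; total = pfx i + w i
    have hsplit : ∑ i', w i' = pfx κ w i + w i := by
      have h3 : univ.filter (fun i' => ¬ κ i' < κ i) = insert i U := by
        ext x
        simp only [Finset.mem_filter, Finset.mem_univ, true_and, Finset.mem_insert, hU]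
        constructor
        · intro hx
          rcases Nat.lt_or_ge (κ i) (κ x) with hlt | hge
          · exact Or.inr hlt
          · exact Or.inl (hκ (by omega))
        · rintro (rfl | hx) <;> omega
      have h4 := Finset.sum_filter_add_sum_filter_not univ (fun i' => κ i' < κ i) w
      rw [h3, hUe, Finset.sum_insert (Finset.notMem_empty i), Finset.sum_empty] at h4
      rw [← h4, pfx]; ring
    rw [hsplit] at h2
    linarith
  · obtain ⟨i', hi'U, hi'min⟩ := Finset.exists_min_image _ κ hUn
    rw [hU, Finset.mem_filter] at hi'U
    have hkey : univ.filter (fun x => κ x < κ i') = insert i (univ.filter (fun x => κ x < κ i)) := by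
      ext x
      simp only [Finset.mem_filter, Finset.mem_univ, true_and, Finset.mem_insert]
      constructor
      · intro hx
        rcases Nat.lt_or_ge (κ x) (κ i) with hlt | hge
        · exact Or.inr hlt
        · rcases Nat.eq_or_lt_of_le hge with heq | hlt2
          · exact Or.inl (hκ heq.symm)
          · exfalso
            have hxU : x ∈ U := by rw [hU]; exact Finset.mem_filter.2 ⟨Finset.mem_univ _, hlt2⟩
            exact absurd hx (not_lt.2 (hi'min x hxU))
      · rintro (rfl | hx)
        · exact hi'U.2
        · omega
    have hpfx' : pfx κ w i' = pfx κ w i + w i := by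
      rw [pfx, hkey, Finset.sum_insert (by simp), pfx]; ring
    have : i' ∈ univ.filter (fun x => A + pfx κ w x ≤ t) := by
      rw [Finset.mem_filter]
      exact ⟨mem_univ _, by rw [hpfx']; linarith⟩
    have := himax i' this
    omega

end Prefix

end Sparse9

namespace Sparse9

section Main

variable (n ℓ : ℕ) (L : ℕ → ℤ) (μ : Measure (Euc n))

/-- real-valued measure of half-open cubes -/
def mre (T : ℤ) (m : Fin n → ℤ) : ℝ := (μ (co n T m)).toReal

lemma mre_nonneg (T : ℤ) (m : Fin n → ℤ) : 0 ≤ mre n μ T m := ENNReal.toReal_nonneg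

/-- scale of level s -/
def Tsc (s : ℕ) : ℤ := if Even s then L (s/2) else L (s/2) + ℓ

/-- depth of step s -/
def dep (s : ℕ) : ℕ := (Tsc ℓ L (s+1) - Tsc ℓ L s).toNat

def Bb (s : ℕ) : ℕ := 2 ^ dep ℓ L s

instance BbNeZero (s : ℕ) : NeZero (Bb ℓ L s) :=
  ⟨Nat.pos_iff_ne_zero.1 (Nat.two_pow_pos _)⟩

lemma Tsc_even {s : ℕ} (hs : Even s) : Tsc ℓ L s = L (s/2) := if_pos hs

lemma Tsc_odd {s : ℕ} (hs : ¬ Even s) : Tsc ℓ L s = L (s/2) + ℓ := if_neg hs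

lemma dep_even (hℓ : 0 < ℓ) {s : ℕ} (hs : Even s) : dep ℓ L s = ℓ := by
  have h1 : Tsc ℓ L s = L (s/2) := Tsc_even ℓ L hs
  have hodd : ¬ Even (s+1) := by simp [Nat.even_add_one, hs]
  have h2 : Tsc ℓ L (s+1) = L ((s+1)/2) + ℓ := Tsc_odd ℓ L hodd
  have hdiv : (s+1)/2 = s/2 := by
    obtain ⟨a, rfl⟩ := hs
    omega
  rw [dep, h1, h2, hdiv]
  simp

section WithHL
variable (hL : ∀ j, L j + (ℓ:ℤ) + 1 ≤ L (j+1))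
include hL

lemma Tsc_succ (s : ℕ) : Tsc ℓ L (s+1) = Tsc ℓ L s + dep ℓ L s := by
  rcases Nat.even_or_odd s with hs | hs
  · have hodd : ¬ Even (s+1) := by simp [Nat.even_add_one, hs]
    have hdiv : (s+1)/2 = s/2 := by obtain ⟨a, rfl⟩ := hs; omega
    rw [dep, Tsc_even ℓ L hs, Tsc_odd ℓ L hodd, hdiv]
    have h0 : (0:ℤ) ≤ (ℓ:ℤ) := Int.ofNat_nonneg _
    rw [Int.toNat_of_nonneg (by omega)]
    ring
  · have hs' : ¬ Even s := Nat.not_even_iff_odd.2 hs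
    have hev : Even (s+1) := by simp [Nat.even_add_one, hs']
    obtain ⟨a, ha⟩ := hs
    have hdiv1 : s/2 = a := by omega
    have hdiv2 : (s+1)/2 = a + 1 := by omega
    rw [dep, Tsc_even ℓ L hev, Tsc_odd ℓ L hs', hdiv1, hdiv2]
    have := hL a
    rw [Int.toNat_of_nonneg (by omega)]
    ring

lemma dep_pos (s : ℕ) (hℓ : 0 < ℓ) : 0 < dep ℓ L s := by
  rcases Nat.even_or_odd s with hs | hs
  · rw [dep_even ℓ L hℓ hs]; exact hℓ
  · have hs' : ¬ Even s := Nat.not_even_iff_odd.2 hs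
    have hev : Even (s+1) := by simp [Nat.even_add_one, hs']
    obtain ⟨a, ha⟩ := hs
    have hdiv1 : s/2 = a := by omega
    have hdiv2 : (s+1)/2 = a + 1 := by omega
    rw [dep, Tsc_even ℓ L hev, Tsc_odd ℓ L hs', hdiv1, hdiv2]
    have := hL a
    omega

lemma Tsc_mono_succ (s : ℕ) (hℓ : 0 < ℓ) : Tsc ℓ L s < Tsc ℓ L (s+1) := by
  rw [Tsc_succ ℓ L hL s]
  have := dep_pos ℓ L hL s hℓ
  omega

variable [IsFiniteMeasure μ]

lemma mre_add (s : ℕ) (m : Fin n → ℤ) :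
    mre n μ (Tsc ℓ L s) m
      = ∑ e : Fin n → Fin (Bb ℓ L s), mre n μ (Tsc ℓ L (s+1)) (child (Bb ℓ L s) m e) := by
  have h := measure_co_eq_sum μ (Tsc ℓ L s) (dep ℓ L s) m
  rw [← Tsc_succ ℓ L hL s] at h
  rw [mre, h, ENNReal.toReal_sum (fun e _ => measure_ne_top μ _)]
  rfl

end WithHL

/-- the chosen child offset (maximizing μ of the child cube) -/
def chosenOff (s : ℕ) (m : Fin n → ℤ) : Fin n → Fin (Bb ℓ L s) :=
  (Finset.exists_max_image Finset.univ
    (fun e : Fin n → Fin (Bb ℓ L s) => mre n μ (Tsc ℓ L (s+1)) (child (Bb ℓ L s) m e))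
    ⟨fun _ => ⟨0, Nat.pos_of_ne_zero (NeZero.ne _)⟩, Finset.mem_univ _⟩).choose

lemma chosenOff_spec (s : ℕ) (m : Fin n → ℤ) (e : Fin n → Fin (Bb ℓ L s)) :
    mre n μ (Tsc ℓ L (s+1)) (child (Bb ℓ L s) m e)
      ≤ mre n μ (Tsc ℓ L (s+1)) (child (Bb ℓ L s) m (chosenOff n ℓ L μ s m)) := by
  have := (Finset.exists_max_image Finset.univ
    (fun e : Fin n → Fin (Bb ℓ L s) => mre n μ (Tsc ℓ L (s+1)) (child (Bb ℓ L s) m e))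
    ⟨fun _ => ⟨0, Nat.pos_of_ne_zero (NeZero.ne _)⟩, Finset.mem_univ _⟩).choose_spec
  exact this.2 e (Finset.mem_univ e)

/-- weights for step s -/
def qf (s : ℕ) (pv : (Fin n → ℤ) → ℝ) (m : Fin n → ℤ) (e : Fin n → Fin (Bb ℓ L s)) : ℝ :=
  if Even s then (if e = chosenOff n ℓ L μ s m then pv m else 0)
  else if mre n μ (Tsc ℓ L s) m = 0 then (if e = fun _ => ⟨0, Nat.pos_of_ne_zero (NeZero.ne _)⟩ then pv m else 0)
  else pv m * mre n μ (Tsc ℓ L (s+1)) (child (Bb ℓ L s) m e) / mre n μ (Tsc ℓ L s) m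

lemma qf_nonneg (s : ℕ) (pv : (Fin n → ℤ) → ℝ) (hpv : ∀ m, 0 ≤ pv m) (m : Fin n → ℤ)
    (e : Fin n → Fin (Bb ℓ L s)) : 0 ≤ qf n ℓ L μ s pv m e := by
  rw [qf]
  split_ifs
  · exact hpv m
  · exact le_refl 0
  · exact hpv m
  · exact le_refl 0
  · exact div_nonneg (mul_nonneg (hpv m) (mre_nonneg n μ _ _)) (mre_nonneg n μ _ _)

lemma qf_sum (hL : ∀ j, L j + (ℓ:ℤ) + 1 ≤ L (j+1)) [IsFiniteMeasure μ]
    (s : ℕ) (pv : (Fin n → ℤ) → ℝ) (m : Fin n → ℤ) :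
    ∑ e : Fin n → Fin (Bb ℓ L s), qf n ℓ L μ s pv m e = pv m := by
  by_cases h1 : Even s
  · simp [qf, h1]
  · by_cases h2 : mre n μ (Tsc ℓ L s) m = 0
    · simp [qf, h1, h2]
      rw [Finset.sum_eq_single_of_mem (fun _ => 0) (Finset.mem_univ _)]
      · simp
      · intro b _ hb; simp [hb]
    · simp only [qf, if_neg h1, if_neg h2]
      rw [← Finset.sum_div, ← Finset.mul_sum, ← mre_add n ℓ L μ hL s m,
        mul_div_assoc, div_self h2, mul_one]

end Main

end Sparse9

namespace Sparse9

section Main2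

variable (n ℓ : ℕ) (L : ℕ → ℤ) (μ : Measure (Euc n)) (c : ℝ) (m₀ : Fin n → ℤ)

def keyf {N B : ℕ} (e : Fin N → Fin B) : ℕ := (finFunctionFinEquiv e : ℕ)

lemma keyf_inj {N B : ℕ} : Function.Injective (keyf (N := N) (B := B)) :=
  Fin.val_injective.comp (Equiv.injective _)

/-- the pair (mass function, left endpoint function) at each level -/
def pa : ℕ → ((Fin n → ℤ) → ℝ) × ((Fin n → ℤ) → ℝ)
  | 0 => ⟨fun m => if m = m₀ then c else 0, fun _ => 0⟩
  | (s+1) =>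
      ⟨fun m' => qf n ℓ L μ s (pa s).1 (anc (Bb ℓ L s) m') (off (Bb ℓ L s) m'),
       fun m' => (pa s).2 (anc (Bb ℓ L s) m')
         + pfx keyf (qf n ℓ L μ s (pa s).1 (anc (Bb ℓ L s) m')) (off (Bb ℓ L s) m')⟩

def pp (s : ℕ) : (Fin n → ℤ) → ℝ := (pa n ℓ L μ c m₀ s).1
def aa (s : ℕ) : (Fin n → ℤ) → ℝ := (pa n ℓ L μ c m₀ s).2

def II (s : ℕ) (m : Fin n → ℤ) : Set ℝ :=
  Set.Ico (aa n ℓ L μ c m₀ s m) (aa n ℓ L μ c m₀ s m + pp n ℓ L μ c m₀ s m)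

lemma pp_zero (m : Fin n → ℤ) : pp n ℓ L μ c m₀ 0 m = if m = m₀ then c else 0 := rfl
lemma aa_zero (m : Fin n → ℤ) : aa n ℓ L μ c m₀ 0 m = 0 := rfl

lemma pp_succ (s : ℕ) (m' : Fin n → ℤ) :
    pp n ℓ L μ c m₀ (s+1) m'
      = qf n ℓ L μ s (pp n ℓ L μ c m₀ s) (anc (Bb ℓ L s) m') (off (Bb ℓ L s) m') := rfl

lemma aa_succ (s : ℕ) (m' : Fin n → ℤ) :
    aa n ℓ L μ c m₀ (s+1) m' = aa n ℓ L μ c m₀ s (anc (Bb ℓ L s) m')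
      + pfx keyf (qf n ℓ L μ s (pp n ℓ L μ c m₀ s) (anc (Bb ℓ L s) m')) (off (Bb ℓ L s) m') := rfl

lemma pp_child (s : ℕ) (m : Fin n → ℤ) (e : Fin n → Fin (Bb ℓ L s)) :
    pp n ℓ L μ c m₀ (s+1) (child (Bb ℓ L s) m e) = qf n ℓ L μ s (pp n ℓ L μ c m₀ s) m e := by
  rw [pp_succ, anc_child, off_child]

lemma aa_child (s : ℕ) (m : Fin n → ℤ) (e : Fin n → Fin (Bb ℓ L s)) :
    aa n ℓ L μ c m₀ (s+1) (child (Bb ℓ L s) m e) = aa n ℓ L μ c m₀ s m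
      + pfx keyf (qf n ℓ L μ s (pp n ℓ L μ c m₀ s) m) e := by
  rw [aa_succ, anc_child, off_child]

variable {c}

lemma pp_nonneg (hc0 : 0 ≤ c) (s : ℕ) (m : Fin n → ℤ) : 0 ≤ pp n ℓ L μ c m₀ s m := by
  induction s generalizing m with
  | zero => rw [pp_zero]; split_ifs <;> simp [hc0]
  | succ s ih => rw [pp_succ]; exact qf_nonneg n ℓ L μ s _ ih _ _

lemma II_subset (hL : ∀ j, L j + (ℓ:ℤ) + 1 ≤ L (j+1)) [IsFiniteMeasure μ] (hc0 : 0 ≤ c)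
    (s : ℕ) (m' : Fin n → ℤ) :
    II n ℓ L μ c m₀ (s+1) m' ⊆ II n ℓ L μ c m₀ s (anc (Bb ℓ L s) m') := by
  set m := anc (Bb ℓ L s) m' with hm
  set e := off (Bb ℓ L s) m' with he
  intro t ht
  rw [II, Set.mem_Ico, aa_succ, pp_succ, ← hm, ← he] at ht
  obtain ⟨ht1, ht2⟩ := ht
  rw [II, Set.mem_Ico]
  have hq : ∀ e', 0 ≤ qf n ℓ L μ s (pp n ℓ L μ c m₀ s) m e' :=
    fun e' => qf_nonneg n ℓ L μ s _ (pp_nonneg n ℓ L μ m₀ hc0 s) m e'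
  constructor
  · have := pfx_nonneg (κ := keyf) hq e
    linarith
  · have h2 := pfx_add_le_tot (κ := keyf) hq e
    rw [qf_sum n ℓ L μ hL s _ m] at h2
    linarith

lemma II_union (hL : ∀ j, L j + (ℓ:ℤ) + 1 ≤ L (j+1)) [IsFiniteMeasure μ] (hc0 : 0 ≤ c)
    (s : ℕ) : ⋃ m, II n ℓ L μ c m₀ s m = Set.Ico 0 c := by
  induction s with
  | zero =>
    apply Set.Subset.antisymm
    · refine Set.iUnion_subset fun m => ?_
      intro t ht
      rw [II, Set.mem_Ico, aa_zero, pp_zero] at ht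
      obtain ⟨h1, h2⟩ := ht
      split_ifs at h2 with hm
      · exact ⟨h1, by linarith⟩
      · exfalso; linarith
    · intro t ht
      refine Set.mem_iUnion.2 ⟨m₀, ?_⟩
      rw [II, aa_zero, pp_zero, if_pos rfl]
      simpa using ht
  | succ s ih =>
    apply Set.Subset.antisymm
    · refine Set.iUnion_subset fun m' => ?_
      refine (II_subset n ℓ L μ m₀ hL hc0 s m').trans ?_
      rw [← ih]
      exact Set.subset_iUnion _ _
    · intro t ht
      rw [← ih] at ht
      obtain ⟨m, hm⟩ := Set.mem_iUnion.1 ht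
      rw [II, Set.mem_Ico] at hm
      obtain ⟨h1, h2⟩ := hm
      have hq : ∀ e', 0 ≤ qf n ℓ L μ s (pp n ℓ L μ c m₀ s) m e' :=
        fun e' => qf_nonneg n ℓ L μ s _ (pp_nonneg n ℓ L μ m₀ hc0 s) m e'
      have h2' : t < aa n ℓ L μ c m₀ s m + ∑ e', qf n ℓ L μ s (pp n ℓ L μ c m₀ s) m e' := by
        rw [qf_sum n ℓ L μ hL s _ m]; exact h2
      obtain ⟨e, he1, he2⟩ := pfx_cover keyf_inj hq h1 h2'
      refine Set.mem_iUnion.2 ⟨child (Bb ℓ L s) m e, ?_⟩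
      rw [II, Set.mem_Ico, aa_child, pp_child]
      exact ⟨he1, he2⟩

lemma II_disj (hL : ∀ j, L j + (ℓ:ℤ) + 1 ≤ L (j+1)) [IsFiniteMeasure μ] (hc0 : 0 ≤ c)
    (s : ℕ) : ∀ m m', m ≠ m' → II n ℓ L μ c m₀ s m ∩ II n ℓ L μ c m₀ s m' = ∅ := by
  induction s with
  | zero =>
    intro m m' hmm
    rw [Set.eq_empty_iff_forall_notMem]
    rintro t ⟨ha, hb⟩
    rw [II, Set.mem_Ico, aa_zero, pp_zero] at ha hb
    obtain ⟨h1, h2⟩ := ha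
    obtain ⟨h3, h4⟩ := hb
    split_ifs at h2 with hm
    · split_ifs at h4 with hm'
      · exact hmm (hm.trans hm'.symm)
      · linarith
    · linarith
  | succ s ih =>
    intro m1 m2 hmm
    by_cases hanc : anc (Bb ℓ L s) m1 = anc (Bb ℓ L s) m2
    · -- same parent, different offsets
      have hoff : off (Bb ℓ L s) m1 ≠ off (Bb ℓ L s) m2 := by
        intro hoffeq
        apply hmm
        have e1 := child_anc_off (Bb ℓ L s) m1
        have e2 := child_anc_off (Bb ℓ L s) m2
        rw [← e1, ← e2, hanc, hoffeq]
      set m := anc (Bb ℓ L s) m1 with hm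
      have hq : ∀ e', 0 ≤ qf n ℓ L μ s (pp n ℓ L μ c m₀ s) m e' :=
        fun e' => qf_nonneg n ℓ L μ s _ (pp_nonneg n ℓ L μ m₀ hc0 s) m e'
      have hkey : keyf (off (Bb ℓ L s) m1) ≠ keyf (off (Bb ℓ L s) m2) :=
        fun hk => hoff (keyf_inj hk)
      rw [Set.eq_empty_iff_forall_notMem]
      rintro t ⟨ha, hb⟩
      rw [II, Set.mem_Ico, aa_succ, pp_succ, ← hm] at ha
      rw [II, Set.mem_Ico, aa_succ, pp_succ, ← hanc] at hb
      obtain ⟨h1, h2⟩ := ha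
      obtain ⟨h3, h4⟩ := hb
      rcases Nat.lt_or_ge (keyf (off (Bb ℓ L s) m1)) (keyf (off (Bb ℓ L s) m2)) with hk | hk
      · have := pfx_add_le hq hk
        linarith
      · have hk' : keyf (off (Bb ℓ L s) m2) < keyf (off (Bb ℓ L s) m1) := by omega
        have := pfx_add_le hq hk'
        linarith
    · rw [Set.eq_empty_iff_forall_notMem]
      intro t ht
      have h1 := II_subset n ℓ L μ m₀ hL hc0 s m1 ht.1
      have h2 := II_subset n ℓ L μ m₀ hL hc0 s m2 ht.2
      have := ih (anc (Bb ℓ L s) m1) (anc (Bb ℓ L s) m2) hanc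
      rw [Set.eq_empty_iff_forall_notMem] at this
      exact this t ⟨h1, h2⟩

end Main2

end Sparse9

namespace Sparse9

section Main3

variable (n ℓ : ℕ) (L : ℕ → ℤ) (μ : Measure (Euc n)) (c : ℝ) (m₀ : Fin n → ℤ)

def Gf (s : ℕ) : ℝ := 2 ^ (n * ℓ * ((s+1)/2))

lemma Gf_pos (s : ℕ) : 0 < Gf n ℓ s := by rw [Gf]; positivity

lemma Gf_succ_even {s : ℕ} (hs : Even s) : Gf n ℓ (s+1) = Gf n ℓ s * 2 ^ (n * ℓ) := by
  obtain ⟨a, rfl⟩ := hs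
  have h1 : (a + a + 1 + 1)/2 = a + 1 := by omega
  have h2 : (a + a + 1)/2 = a := by omega
  rw [Gf, Gf, h1, h2, ← pow_add]
  ring_nf

lemma Gf_succ_odd {s : ℕ} (hs : ¬ Even s) : Gf n ℓ (s+1) = Gf n ℓ s := by
  obtain ⟨a, ha⟩ := Nat.not_even_iff_odd.1 hs
  subst ha
  have h1 : (2*a + 1 + 1 + 1)/2 = a + 1 := by omega
  have h2 : (2*a + 1 + 1)/2 = a + 1 := by omega
  rw [Gf, Gf, h1, h2]

variable {c}

lemma pp_le_inv (hL : ∀ j, L j + (ℓ:ℤ) + 1 ≤ L (j+1)) [IsFiniteMeasure μ] (hℓ : 0 < ℓ)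
    (hc0 : 0 ≤ c) (hcm : c ≤ mre n μ (L 0) m₀) (s : ℕ) (m : Fin n → ℤ) :
    pp n ℓ L μ c m₀ s m ≤ Gf n ℓ s * mre n μ (Tsc ℓ L s) m := by
  induction s generalizing m with
  | zero =>
    rw [pp_zero]
    have hT0 : Tsc ℓ L 0 = L 0 := by rw [Tsc_even ℓ L (Even.zero)]; norm_num
    have hG0 : Gf n ℓ 0 = 1 := by rw [Gf]; norm_num
    rw [hT0, hG0, one_mul]
    split_ifs with hm
    · subst hm; exact hcm
    · exact mre_nonneg n μ _ _
  | succ s ih =>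
    set B := Bb ℓ L s with hB
    set ma := anc B m with hma
    set e := off B m with he
    have hm' : child B ma e = m := child_anc_off B m
    rw [pp_succ]
    rcases Nat.even_or_odd s with hs | hs
    · -- choice step
      rw [qf, if_pos hs]
      rw [← he, ← hma]
      split_ifs with hee
      · -- e is the chosen offset
        have hsum := mre_add n ℓ L μ hL s ma
        have hcard : ∀ e' : Fin n → Fin B,
            mre n μ (Tsc ℓ L (s+1)) (child B ma e')
              ≤ mre n μ (Tsc ℓ L (s+1)) (child B ma (chosenOff n ℓ L μ s ma)) :=
          fun e' => chosenOff_spec n ℓ L μ s ma e'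
        have hBs : (B:ℕ) = 2 ^ ℓ := by rw [hB, Bb, dep_even ℓ L hℓ hs]
        have hcardty : Fintype.card (Fin n → Fin B) = 2 ^ (ℓ * n) := by
          rw [Fintype.card_fun, Fintype.card_fin, Fintype.card_fin, hBs, ← pow_mul]
        have hmre_le : mre n μ (Tsc ℓ L s) ma
            ≤ 2 ^ (n * ℓ) * mre n μ (Tsc ℓ L (s+1)) (child B ma (chosenOff n ℓ L μ s ma)) := by
          rw [hsum]
          calc (∑ e' : Fin n → Fin B, mre n μ (Tsc ℓ L (s+1)) (child B ma e'))
              ≤ ∑ _e' : Fin n → Fin B,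
                mre n μ (Tsc ℓ L (s+1)) (child B ma (chosenOff n ℓ L μ s ma)) :=
                Finset.sum_le_sum (fun e' _ => hcard e')
            _ = 2 ^ (n * ℓ) * mre n μ (Tsc ℓ L (s+1)) (child B ma (chosenOff n ℓ L μ s ma)) := by
                rw [Finset.sum_const, Finset.card_univ, hcardty, nsmul_eq_mul]
                push_cast
                rw [Nat.mul_comm ℓ n]
        have hih := ih ma
        have hGmul := Gf_succ_even n ℓ hs
        have hchosen : child B ma (chosenOff n ℓ L μ s ma) = m := by
          rw [← hee]; exact hm'
        rw [← hchosen]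
        calc pp n ℓ L μ c m₀ s ma ≤ Gf n ℓ s * mre n μ (Tsc ℓ L s) ma := hih
          _ ≤ Gf n ℓ s * (2 ^ (n * ℓ) * mre n μ (Tsc ℓ L (s+1)) (child B ma (chosenOff n ℓ L μ s ma))) := by
              apply mul_le_mul_of_nonneg_left hmre_le (le_of_lt (Gf_pos n ℓ s))
          _ = Gf n ℓ (s+1) * mre n μ (Tsc ℓ L (s+1)) (child B ma (chosenOff n ℓ L μ s ma)) := by
              rw [hGmul]; ring
      · exact mul_nonneg (le_of_lt (Gf_pos n ℓ (s+1))) (mre_nonneg n μ _ _)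
    · -- proportional step
      have hs' : ¬ Even s := Nat.not_even_iff_odd.2 hs
      rw [qf, if_neg hs', ← he, ← hma]
      have hGeq := Gf_succ_odd n ℓ hs'
      split_ifs with hz hz2
      · -- parent cube has zero measure: pp s ma = 0
        have h1 := ih ma
        rw [hz, mul_zero] at h1
        have h2 := pp_nonneg n ℓ L μ m₀ hc0 s ma
        have h3 : pp n ℓ L μ c m₀ s ma = 0 := le_antisymm h1 h2
        rw [h3]
        exact mul_nonneg (le_of_lt (Gf_pos n ℓ (s+1))) (mre_nonneg n μ _ _)
      · exact mul_nonneg (le_of_lt (Gf_pos n ℓ (s+1))) (mre_nonneg n μ _ _)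
      · have hih := ih ma
        have hmz : 0 < mre n μ (Tsc ℓ L s) ma :=
          lt_of_le_of_ne (mre_nonneg n μ _ _) (Ne.symm hz)
        rw [hGeq, hm']
        have hch : 0 ≤ mre n μ (Tsc ℓ L (s+1)) m := mre_nonneg n μ _ _
        rw [div_le_iff₀ hmz]
        nlinarith [mul_le_mul_of_nonneg_right hih hch]

end Main3

end Sparse9

namespace Sparse9

section Main4

variable (n ℓ : ℕ) (L : ℕ → ℤ) (μ : Measure (Euc n)) (c : ℝ) (m₀ : Fin n → ℤ)

open Classical in
/-- branch index of t at level s -/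
def W (s : ℕ) (t : ℝ) : Fin n → ℤ :=
  if h : ∃ m, t ∈ II n ℓ L μ c m₀ s m then h.choose else fun _ => 0

variable {c}
variable (hL : ∀ j, L j + (ℓ:ℤ) + 1 ≤ L (j+1)) [IsFiniteMeasure μ] (hc0 : 0 ≤ c)
include hL hc0

lemma W_mem {t : ℝ} (ht : t ∈ Set.Ico 0 c) (s : ℕ) :
    t ∈ II n ℓ L μ c m₀ s (W n ℓ L μ c m₀ s t) := by
  have : t ∈ ⋃ m, II n ℓ L μ c m₀ s m := by
    rw [II_union n ℓ L μ m₀ hL hc0 s]; exact ht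
  obtain ⟨m, hm⟩ := Set.mem_iUnion.1 this
  rw [W, dif_pos ⟨m, hm⟩]
  exact (Exists.choose_spec (⟨m, hm⟩ : ∃ m, t ∈ II n ℓ L μ c m₀ s m))

lemma W_eq {t : ℝ} {s : ℕ} {m : Fin n → ℤ} (hm : t ∈ II n ℓ L μ c m₀ s m) :
    W n ℓ L μ c m₀ s t = m := by
  rw [W, dif_pos ⟨m, hm⟩]
  set m' := Exists.choose (⟨m, hm⟩ : ∃ m, t ∈ II n ℓ L μ c m₀ s m) with hm'
  have hmem : t ∈ II n ℓ L μ c m₀ s m' :=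
    Exists.choose_spec (⟨m, hm⟩ : ∃ m, t ∈ II n ℓ L μ c m₀ s m)
  by_contra hne
  have := II_disj n ℓ L μ m₀ hL hc0 s m' m hne
  rw [Set.eq_empty_iff_forall_notMem] at this
  exact this t ⟨hmem, hm⟩

lemma W_anc {t : ℝ} (ht : t ∈ Set.Ico 0 c) (s : ℕ) :
    anc (Bb ℓ L s) (W n ℓ L μ c m₀ (s+1) t) = W n ℓ L μ c m₀ s t := by
  have h1 := W_mem n ℓ L μ m₀ hL hc0 ht (s+1)
  have h2 := II_subset n ℓ L μ m₀ hL hc0 s (W n ℓ L μ c m₀ (s+1) t) h1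
  exact (W_eq n ℓ L μ m₀ hL hc0 h2).symm

lemma pp_pos_W {t : ℝ} (ht : t ∈ Set.Ico 0 c) (s : ℕ) :
    0 < pp n ℓ L μ c m₀ s (W n ℓ L μ c m₀ s t) := by
  have h1 := W_mem n ℓ L μ m₀ hL hc0 ht s
  rw [II, Set.mem_Ico] at h1
  linarith [h1.1, h1.2]

lemma W_junk {t : ℝ} (ht : t ∉ Set.Ico 0 c) (s : ℕ) :
    W n ℓ L μ c m₀ s t = fun _ => 0 := by
  rw [W, dif_neg]
  rintro ⟨m, hm⟩
  apply ht
  rw [← II_union n ℓ L μ m₀ hL hc0 s]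
  exact Set.mem_iUnion.2 ⟨m, hm⟩

lemma measurable_W (s : ℕ) : Measurable (W n ℓ L μ c m₀ s) := by
  apply measurable_to_countable'
  intro m
  by_cases hm : m = fun _ => (0:ℤ)
  · have : W n ℓ L μ c m₀ s ⁻¹' {m} = II n ℓ L μ c m₀ s m ∪ (Set.Ico 0 c)ᶜ := by
      ext t
      simp only [Set.mem_preimage, Set.mem_singleton_iff, Set.mem_union, Set.mem_compl_iff]
      constructor
      · intro hW
        by_cases ht : t ∈ Set.Ico 0 c
        · left; rw [← hW]; exact W_mem n ℓ L μ m₀ hL hc0 ht s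
        · right; exact ht
      · intro hca
        by_cases ht : t ∈ Set.Ico 0 c
        · rcases hca with hca | hca
          · exact W_eq n ℓ L μ m₀ hL hc0 hca
          · exact absurd ht hca
        · rw [W_junk n ℓ L μ m₀ hL hc0 ht s, hm]
    rw [this]
    exact (measurableSet_Ico.union measurableSet_Ico.compl)
  · have : W n ℓ L μ c m₀ s ⁻¹' {m} = II n ℓ L μ c m₀ s m := by
      ext t
      simp only [Set.mem_preimage, Set.mem_singleton_iff]
      constructor
      · intro hW
        by_cases ht : t ∈ Set.Ico 0 c
        · rw [← hW]; exact W_mem n ℓ L μ m₀ hL hc0 ht s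
        · exfalso; exact hm (hW ▸ (W_junk n ℓ L μ m₀ hL hc0 ht s))
      · exact fun hmem => W_eq n ℓ L μ m₀ hL hc0 hmem
    rw [this]
    exact measurableSet_Ico

/-- nested cube chain -/
lemma co_W_chain {t : ℝ} (ht : t ∈ Set.Ico 0 c) (s s' : ℕ) (hss : s ≤ s') :
    co n (Tsc ℓ L s') (W n ℓ L μ c m₀ s' t) ⊆ co n (Tsc ℓ L s) (W n ℓ L μ c m₀ s t) := by
  induction s' with
  | zero =>
    have : s = 0 := Nat.le_zero.1 hss
    subst this; exact subset_rfl
  | succ s' ih =>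
    rcases Nat.lt_or_ge s (s'+1) with hlt | hge
    · have hss' : s ≤ s' := by omega
      refine Set.Subset.trans ?_ (ih hss')
      have heq : Tsc ℓ L (s'+1) = Tsc ℓ L s' + (dep ℓ L s' : ℤ) := Tsc_succ ℓ L hL s'
      have h1 : co n (Tsc ℓ L s' + (dep ℓ L s' : ℤ)) (W n ℓ L μ c m₀ (s'+1) t)
          ⊆ co n (Tsc ℓ L s') (anc (2 ^ dep ℓ L s') (W n ℓ L μ c m₀ (s'+1) t)) :=
        co_anc_subset _ _ _
      rw [← heq] at h1
      have h2 : anc (2 ^ dep ℓ L s') (W n ℓ L μ c m₀ (s'+1) t) = W n ℓ L μ c m₀ s' t := by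
        have := W_anc n ℓ L μ m₀ hL hc0 ht s'
        rwa [Bb] at this
      rwa [h2] at h1
    · have : s = s' + 1 := by omega
      subst this; exact subset_rfl

end Main4

end Sparse9

namespace Sparse9

section Main5

variable (n ℓ : ℕ) (L : ℕ → ℤ) (μ : Measure (Euc n)) (c : ℝ) (m₀ : Fin n → ℤ)

/-- corner point sequence along the branch of t -/
def gpt (s : ℕ) (t : ℝ) : Euc n := pt n (Tsc ℓ L s) (W n ℓ L μ c m₀ s t)

/-- the coding map -/
def phi (t : ℝ) : Euc n := limUnder atTop (fun s => gpt n ℓ L μ c m₀ s t)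

lemma pt_zero (T : ℤ) : pt n T (fun _ => 0) = 0 := by
  ext i
  show ((0:ℤ):ℝ) * 2 ^ (-T) = 0
  norm_num

lemma Tsc_lb (hL : ∀ j, L j + (ℓ:ℤ) + 1 ≤ L (j+1)) (hℓ : 0 < ℓ) (s : ℕ) :
    Tsc ℓ L 0 + s ≤ Tsc ℓ L s := by
  induction s with
  | zero => omega
  | succ s ih =>
    have := Tsc_mono_succ ℓ L hL s hℓ
    omega

variable {c}
variable (hL : ∀ j, L j + (ℓ:ℤ) + 1 ≤ L (j+1)) [IsFiniteMeasure μ] (hc0 : 0 ≤ c)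
    (hℓ : 0 < ℓ)
include hL hc0 hℓ

lemma gpt_mem {t : ℝ} (ht : t ∈ Set.Ico 0 c) {s s' : ℕ} (hss : s ≤ s') :
    gpt n ℓ L μ c m₀ s' t ∈ co n (Tsc ℓ L s) (W n ℓ L μ c m₀ s t) :=
  co_W_chain n ℓ L μ m₀ hL hc0 ht s s' hss (pt_mem_co _ _)

lemma gpt_cauchy (t : ℝ) : CauchySeq (fun s => gpt n ℓ L μ c m₀ s t) := by
  by_cases ht : t ∈ Set.Ico 0 c
  · apply cauchySeq_of_le_tendsto_0 (fun N => Real.sqrt n * 2 ^ (-(Tsc ℓ L N)))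
    · intro s s' N hs hs'
      have h1 : gpt n ℓ L μ c m₀ s t ∈ dyadicCube n (Tsc ℓ L N) (W n ℓ L μ c m₀ N t) :=
        co_subset_dyadic _ _ (gpt_mem n ℓ L μ m₀ hL hc0 hℓ ht hs)
      have h2 : gpt n ℓ L μ c m₀ s' t ∈ dyadicCube n (Tsc ℓ L N) (W n ℓ L μ c m₀ N t) :=
        co_subset_dyadic _ _ (gpt_mem n ℓ L μ m₀ hL hc0 hℓ ht hs')
      exact dist_le_of_mem_dyadic _ _ h1 h2
    · -- the bound tends to 0
      have hb : ∀ N : ℕ, Real.sqrt n * 2 ^ (-(Tsc ℓ L N))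
          ≤ (Real.sqrt n * 2 ^ (-(Tsc ℓ L 0))) * (1/2) ^ N := by
        intro N
        have h1 : -(Tsc ℓ L N) ≤ -(Tsc ℓ L 0) - N := by
          have := Tsc_lb ℓ L hL hℓ N
          omega
        have h2 : (2:ℝ) ^ (-(Tsc ℓ L N)) ≤ 2 ^ (-(Tsc ℓ L 0) - (N:ℤ)) :=
          zpow_le_zpow_right₀ one_le_two h1
        have h3 : (2:ℝ) ^ (-(Tsc ℓ L 0) - (N:ℤ)) = 2 ^ (-(Tsc ℓ L 0)) * (1/2)^N := by
          rw [sub_eq_add_neg, zpow_add₀ (by norm_num : (2:ℝ) ≠ 0)]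
          congr 1
          rw [zpow_neg, ← zpow_natCast, one_div, inv_zpow]
        rw [h3] at h2
        have hs : (0:ℝ) ≤ Real.sqrt n := Real.sqrt_nonneg n
        calc Real.sqrt n * 2 ^ (-(Tsc ℓ L N))
            ≤ Real.sqrt n * (2 ^ (-(Tsc ℓ L 0)) * (1/2)^N) :=
              mul_le_mul_of_nonneg_left h2 hs
          _ = (Real.sqrt n * 2 ^ (-(Tsc ℓ L 0))) * (1/2) ^ N := by ring
      apply squeeze_zero (fun N => by positivity) hb
      rw [← mul_zero (Real.sqrt n * 2 ^ (-(Tsc ℓ L 0)))]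
      exact (tendsto_pow_atTop_nhds_zero_of_lt_one (by norm_num) (by norm_num)).const_mul _
  · -- constant sequence
    have : (fun s => gpt n ℓ L μ c m₀ s t) = fun _ => (0 : Euc n) := by
      funext s
      rw [gpt, W_junk n ℓ L μ m₀ hL hc0 ht s, pt_zero]
    rw [this]
    exact cauchySeq_const _

lemma phi_tendsto (t : ℝ) :
    Filter.Tendsto (fun s => gpt n ℓ L μ c m₀ s t) atTop (nhds (phi n ℓ L μ c m₀ t)) :=
  (gpt_cauchy n ℓ L μ m₀ hL hc0 hℓ t).tendsto_limUnder

lemma measurable_phi : Measurable (phi n ℓ L μ c m₀) := by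
  apply measurable_of_tendsto_metrizable
    (f := fun s t => gpt n ℓ L μ c m₀ s t)
  · intro s
    exact (measurable_of_countable (fun m => pt n (Tsc ℓ L s) m)).comp
      (measurable_W n ℓ L μ m₀ hL hc0 s)
  · rw [tendsto_pi_nhds]
    intro t
    exact phi_tendsto n ℓ L μ m₀ hL hc0 hℓ t

/-- the limit point lies in the closed cube of every level of its branch -/
lemma phi_mem_cube {t : ℝ} (ht : t ∈ Set.Ico 0 c) (s : ℕ) :
    phi n ℓ L μ c m₀ t ∈ dyadicCube n (Tsc ℓ L s) (W n ℓ L μ c m₀ s t) := by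
  apply (isClosed_dyadicCube _ _).mem_of_tendsto (phi_tendsto n ℓ L μ m₀ hL hc0 hℓ t)
  filter_upwards [Filter.eventually_ge_atTop s] with s' hs'
  exact co_subset_dyadic _ _ (gpt_mem n ℓ L μ m₀ hL hc0 hℓ ht hs')

/-- at odd levels the branch passes through the chosen cube -/
lemma W_odd_chosen {t : ℝ} (ht : t ∈ Set.Ico 0 c) (j : ℕ) :
    W n ℓ L μ c m₀ (2*j+1) t
      = child (Bb ℓ L (2*j)) (W n ℓ L μ c m₀ (2*j) t)
          (chosenOff n ℓ L μ (2*j) (W n ℓ L μ c m₀ (2*j) t)) := by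
  have hpos := pp_pos_W n ℓ L μ m₀ hL hc0 ht (2*j+1)
  set s := 2*j with hs
  have hev : Even s := ⟨j, by omega⟩
  rw [pp_succ] at hpos
  rw [qf, if_pos hev] at hpos
  split_ifs at hpos with hee
  · have h1 := child_anc_off (Bb ℓ L s) (W n ℓ L μ c m₀ (s+1) t)
    have h2 := W_anc n ℓ L μ m₀ hL hc0 ht s
    rw [← h1, h2, hee, h2]
  · exact absurd hpos (lt_irrefl 0)

end Main5

end Sparse9

namespace Sparse9

open MeasureTheory

lemma dyadic_child_subset {n : ℕ} (T : ℤ) (d : ℕ) {B : ℕ} (hBd : B = 2^d) (m : Fin n → ℤ)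
    (e : Fin n → Fin B) :
    dyadicCube n (T + d) (child B m e) ⊆ dyadicCube n T m := by
  subst hBd
  intro x hx i
  obtain ⟨h1, h2⟩ := hx i
  have hkey : (2:ℝ)^(-(T+(d:ℤ))) * 2^d = 2^(-T) := by
    rw [← zpow_natCast (2:ℝ) d, ← zpow_add₀ (by norm_num : (2:ℝ) ≠ 0)]
    congr 1; ring
  have hpos : (0:ℝ) < 2^(-(T+(d:ℤ))) := by positivity
  have hdpos : (0:ℝ) < 2^d := by positivity
  have hch : ((child (2^d) m e i : ℤ) : ℝ) = (2:ℝ)^d * m i + (e i : ℕ) := by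
    simp only [child]; push_cast; ring
  rw [hch] at h1 h2
  have he0 : (0:ℝ) ≤ (e i : ℕ) := by positivity
  have he1 : ((e i : ℕ) : ℝ) + 1 ≤ (2:ℝ)^d := by
    have : ((e i : ℕ)) + 1 ≤ 2^d := (e i).2
    exact_mod_cast this
  constructor
  · have : (m i : ℝ) * 2^(-T) = ((2:ℝ)^d * m i) * 2^(-(T+(d:ℤ))) := by
      rw [mul_comm ((2:ℝ)^d) (m i : ℝ), mul_assoc, mul_comm ((2:ℝ)^d), hkey]
    rw [this]
    nlinarith
  · have : ((m i : ℝ) + 1) * 2^(-T) = ((2:ℝ)^d * (m i + 1)) * 2^(-(T+(d:ℤ))) := by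
      rw [mul_comm ((2:ℝ)^d) ((m i : ℝ) + 1), mul_assoc, mul_comm ((2:ℝ)^d), hkey]
    rw [this]
    nlinarith

lemma mre_add_gen {n : ℕ} (μ : Measure (Euc n)) [IsFiniteMeasure μ] (T : ℤ) (D : ℕ)
    (m : Fin n → ℤ) :
    mre n μ T m = ∑ e : Fin n → Fin (2^D), mre n μ (T + D) (child (2^D) m e) := by
  have h := measure_co_eq_sum μ T D m
  rw [mre, h, ENNReal.toReal_sum (fun e _ => measure_ne_top μ _)]
  rfl

lemma int_decomp (D : ℕ) (a m : ℤ) (h1 : 2^D * a - 1 ≤ m) (h2 : m ≤ 2^D * (a+1)) :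
    ∃ (δ : Fin 3) (e : Fin (2^D)), m = 2^D * (a + (δ:ℤ) - 1) + (e:ℤ) := by
  have hD : (0:ℤ) < 2^D := by positivity
  have hexp : (2:ℤ)^D * (a+1) = 2^D * a + 2^D := by ring
  have hcast : ((2^D : ℕ) : ℤ) = 2^D := by push_cast; ring
  have hDnat : 0 < 2^D := Nat.pos_of_ne_zero (by positivity)
  rcases lt_or_ge m (2^D * a) with hc1 | hc1
  · -- m = 2^D * a - 1
    have hm : m = 2^D * a - 1 := by omega
    refine ⟨⟨0, by norm_num⟩, ⟨(2^D - 1 : ℕ), by omega⟩, ?_⟩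
    have : (((2^D - 1 : ℕ)) : ℤ) = 2^D - 1 := by omega
    rw [this]
    simp only [Fin.val_mk]
    push_cast
    rw [hm]; ring
  · rcases lt_or_ge m (2^D * (a+1)) with hc2 | hc2
    · refine ⟨⟨1, by norm_num⟩, ⟨(m - 2^D * a).toNat, by omega⟩, ?_⟩
      have : (((m - 2^D * a).toNat : ℕ) : ℤ) = m - 2^D * a := Int.toNat_of_nonneg (by omega)
      simp only [Fin.val_mk]
      rw [this]
      push_cast
      ring
    · have hm : m = 2^D * (a+1) := le_antisymm h2 hc2
      refine ⟨⟨2, by norm_num⟩, ⟨0, by positivity⟩, ?_⟩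
      simp only [Fin.val_mk]
      push_cast
      rw [hm]; ring

lemma co_iUnion_univ {n : ℕ} (T : ℤ) : (⋃ m, co n T m) = (Set.univ : Set (Euc n)) := by
  apply Set.eq_univ_of_forall
  intro x
  refine Set.mem_iUnion.2 ⟨fun i => ⌊x i * 2^T⌋, fun i => ⟨Int.floor_le _, ?_⟩⟩
  exact Int.lt_floor_add_one _

lemma exists_m0 {n : ℕ} (μ : Measure (Euc n)) (hμ : μ ≠ 0) (T : ℤ) :
    ∃ m : Fin n → ℤ, μ (co n T m) ≠ 0 := by
  by_contra hall
  push_neg at hall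
  apply hμ
  have h1 : μ Set.univ = 0 := by
    rw [← co_iUnion_univ T]
    refine le_antisymm (le_trans (measure_iUnion_le _) ?_) zero_le
    simp [hall]
  exact Measure.measure_univ_eq_zero.1 h1

lemma isClosed_msupport {n : ℕ} (μ : Measure (Euc n)) : IsClosed (msupport μ) := by
  rw [← isOpen_compl_iff]
  rw [isOpen_iff_forall_mem_open]
  intro x hx
  simp only [msupport, Set.mem_compl_iff, Set.mem_setOf_eq, not_forall] at hx
  obtain ⟨U, hUopen, hxU, hU0⟩ := hx
  refine ⟨U, fun y hy => ?_, hUopen, hxU⟩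
  simp only [msupport, Set.mem_compl_iff, Set.mem_setOf_eq, not_forall]
  exact ⟨U, hUopen, hy, hU0⟩

lemma msupport_map_subset {n : ℕ} {s : Set ℝ} {φ : ℝ → Euc n} (hφ : Measurable φ) :
    msupport (Measure.map φ ((volume : Measure ℝ).restrict s)) ⊆ closure (φ '' s) := by
  intro x hx
  by_contra hxc
  have hU : IsOpen (closure (φ '' s))ᶜ := isClosed_closure.isOpen_compl
  have h0 := hx _ hU hxc
  rw [Measure.map_apply hφ hU.measurableSet, Measure.restrict_apply (hφ hU.measurableSet)] at h0
  have : φ ⁻¹' (closure (φ '' s))ᶜ ∩ s = ∅ := by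
    rw [Set.eq_empty_iff_forall_notMem]
    rintro t ⟨ht1, ht2⟩
    exact ht1 (subset_closure ⟨t, ht2, rfl⟩)
  rw [this] at h0
  simp at h0

lemma locallyFinite_dyadic {n : ℕ} (T : ℤ) (F : (Fin n → ℤ) → Set (Euc n))
    (hF : ∀ m, F m ⊆ dyadicCube n T m) : LocallyFinite F := by
  intro x
  refine ⟨Metric.ball x (2^(-T)), Metric.ball_mem_nhds x (by positivity), ?_⟩
  have hsub : {m | (F m ∩ Metric.ball x (2^(-T))).Nonempty}
      ⊆ Set.pi Set.univ (fun i => Set.Icc (⌊x i * 2^T⌋ - 2) (⌊x i * 2^T⌋ + 2)) := by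
    rintro m ⟨y, hy1, hy2⟩
    have hyQ := hF m hy1
    intro i _
    obtain ⟨h1, h2⟩ := hyQ i
    rw [Metric.mem_ball] at hy2
    have hdist := lt_of_le_of_lt (dist_coord_le y x i) hy2
    rw [abs_sub_lt_iff] at hdist
    obtain ⟨hd1, hd2⟩ := hdist
    have hTpos : (0:ℝ) < 2^(-T) := by positivity
    have hTpos' : (0:ℝ) < 2^T := by positivity
    have hinv : (2:ℝ)^(-T) * 2^T = 1 := by
      rw [← zpow_add₀ (by norm_num : (2:ℝ) ≠ 0)]; simp
    -- bounds : m i * 2^{-T} ≤ y i < x i + 2^{-T} and x i - 2^{-T} < y i ≤ (m i + 1) 2^{-T}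
    have hb1 : (m i : ℝ) < x i * 2^T + 1 := by
      have : (m i : ℝ) * 2^(-T) < x i + 2^(-T) := by linarith
      have h3 : (m i : ℝ) * 2^(-T) * 2^T < (x i + 2^(-T)) * 2^T := by
        exact mul_lt_mul_of_pos_right this hTpos'
      rw [mul_assoc, hinv, mul_one] at h3
      rw [add_mul, hinv] at h3
      linarith
    have hb2 : x i * 2^T - 2 < (m i : ℝ) := by
      have : x i - 2^(-T) < ((m i : ℝ) + 1) * 2^(-T) := by linarith
      have h3 : (x i - 2^(-T)) * 2^T < ((m i : ℝ) + 1) * 2^(-T) * 2^T :=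
        mul_lt_mul_of_pos_right this hTpos'
      rw [mul_assoc, hinv, mul_one] at h3
      rw [sub_mul, hinv] at h3
      linarith
    constructor
    · -- ⌊x i 2^T⌋ - 2 ≤ m i
      have hfl : (⌊x i * 2^T⌋ : ℝ) ≤ x i * 2^T := Int.floor_le _
      have hreal : (⌊x i * 2^T⌋ : ℝ) - 2 < (m i : ℝ) + 1 := by linarith
      have h4 : (⌊x i * 2^T⌋ : ℤ) - 2 < m i + 1 := by exact_mod_cast hreal
      omega
    · have hfl : x i * 2^T < (⌊x i * 2^T⌋ : ℝ) + 1 := Int.lt_floor_add_one _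
      have h4 : (m i : ℝ) < (⌊x i * 2^T⌋ : ℝ) + 2 := by linarith
      have h5 : m i < ⌊x i * 2^T⌋ + 2 := by exact_mod_cast h4
      omega
  exact Set.Finite.subset (Set.Finite.pi (fun i => Set.finite_Icc _ _)) hsub

end Sparse9

open Sparse9 in
set_option maxHeartbeats 3000000 in
theorem stmt_9' (n k : ℕ) (hk : 1 ≤ k) (hkn : k < n)
    (h : ℝ → ℝ) (hcont : Continuous h) (hmono : Monotone h) (h0 : h 0 = 0)
    (hvanish : Tendsto (fun r => h r / r ^ (k:ℝ)) (nhdsWithin 0 (Set.Ioi 0)) (nhds 0))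
    (μ : Measure (Euc n)) (hμ : μ ≠ 0) [IsFiniteMeasure μ]
    (hfrost : ∀ Q : Set (Euc n), (∃ j m, Q = dyadicCube n j m) → μ Q ≤ ENNReal.ofReal (h (Metric.diam Q)))
    (ℓ : ℕ) (hℓ : 0 < ℓ) :
    ∃ ν : Measure (Euc n), ν ≠ 0 ∧ IsFiniteMeasure ν ∧
      (∀ Q : Set (Euc n), (∃ j m, Q = dyadicCube n j m) → ν Q ≤ ENNReal.ofReal (Metric.diam Q ^ (k:ℝ))) ∧
      msupport ν ⊆ msupport μ ∧
      (∃ l : ℕ → ℤ, Tendsto l atTop atTop ∧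
        ∀ j, ∃ sel : (Fin n → ℤ) → (Fin n → ℤ),
          (∀ m, dyadicCube n (l j + ℓ) (sel m) ⊆ dyadicCube n (l j) m) ∧
          msupport ν ⊆ ⋃ m, dyadicCube n (l j + ℓ) (sel m)) := by
  classical
  have hn : 0 < n := by omega
  have hsq : (0:ℝ) < Real.sqrt n := Real.sqrt_pos.2 (by exact_mod_cast hn)
  -- extract the vanishing condition
  have hvan : ∀ ε : ℝ, 0 < ε → ∃ δ : ℝ, 0 < δ ∧ ∀ r : ℝ, 0 < r → r < δ → h r < ε * r ^ k := by
    intro ε hε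
    rw [Metric.tendsto_nhdsWithin_nhds] at hvanish
    obtain ⟨δ, hδ, hd⟩ := hvanish ε hε
    refine ⟨δ, hδ, fun r hr hrδ => ?_⟩
    have hdist : dist r 0 < δ := by rw [Real.dist_eq, sub_zero, abs_of_pos hr]; exact hrδ
    have h2 := hd (Set.mem_Ioi.2 hr) hdist
    rw [Real.dist_eq, sub_zero] at h2
    have hrk : (0:ℝ) < r ^ (k:ℝ) := Real.rpow_pos_of_pos hr _
    have habs : h r / r ^ (k:ℝ) < ε := lt_of_abs_lt h2
    rw [div_lt_iff₀ hrk] at habs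
    have h4 : h r < ε * r ^ (k:ℝ) := by linarith
    rwa [Real.rpow_natCast] at h4
  -- epsilon and delta sequences
  set εf : ℕ → ℝ := fun i => ((3:ℝ)^n * 2^(n*ℓ*(i+1)))⁻¹ with hεf
  have hεpos : ∀ i, 0 < εf i := fun i => by rw [hεf]; positivity
  choose δf hδf hhf using fun i => hvan (εf i) (hεpos i)
  -- scales
  have hexM : ∀ δ : ℝ, 0 < δ → ∃ M : ℤ, Real.sqrt n * 2^(-M) < δ := by
    intro δ hδ
    obtain ⟨N, hN⟩ := exists_pow_lt_of_lt_one (x := δ / Real.sqrt n) (by positivity)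
      (by norm_num : (1:ℝ)/2 < 1)
    refine ⟨N, ?_⟩
    have heq : (2:ℝ)^(-(N:ℤ)) = (1/2)^N := by
      rw [zpow_neg, ← zpow_natCast, one_div, inv_zpow]
    rw [heq]
    calc Real.sqrt n * (1/2)^N < Real.sqrt n * (δ / Real.sqrt n) := by
          exact mul_lt_mul_of_pos_left hN hsq
      _ = δ := by field_simp
  choose Mf hMf using fun i => hexM (δf i) (hδf i)
  set L : ℕ → ℤ := fun i => Nat.rec (Mf 0) (fun i Li => max (Li + ℓ + 1) (Mf (i+1))) i with hLdef
  have hLs : ∀ i, L (i+1) = max (L i + ℓ + 1) (Mf (i+1)) := fun i => rfl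
  have hL : ∀ j, L j + (ℓ:ℤ) + 1 ≤ L (j+1) := fun j => by rw [hLs]; exact le_max_left _ _
  have hLM : ∀ i, Mf i ≤ L i := by
    intro i
    cases i with
    | zero => exact le_refl _
    | succ i => rw [hLs]; exact le_max_right _ _
  have hLδ : ∀ i, Real.sqrt n * 2^(-(L i)) < δf i := by
    intro i
    refine lt_of_le_of_lt ?_ (hMf i)
    have : (2:ℝ)^(-(L i)) ≤ 2^(-(Mf i)) := zpow_le_zpow_right₀ one_le_two (by
      have := hLM i; omega)
    nlinarith [hsq.le]
  have hLlb : ∀ i : ℕ, L 0 + i ≤ L i := by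
    intro i
    induction i with
    | zero => omega
    | succ i ih => have := hL i; omega
  -- root cube
  obtain ⟨m₀, hm₀⟩ := exists_m0 μ hμ (L 0)
  have hmre0 : 0 < mre n μ (L 0) m₀ := ENNReal.toReal_pos hm₀ (measure_ne_top μ _)
  set Cbig : ℝ := (Real.sqrt n * 2^(-(L 0)))^k with hCbig
  have hCbigpos : 0 < Cbig := by rw [hCbig]; positivity
  set c : ℝ := min (mre n μ (L 0) m₀) Cbig with hcdef
  have hc0 : 0 < c := lt_min hmre0 hCbigpos
  have hcm : c ≤ mre n μ (L 0) m₀ := min_le_left _ _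
  -- the measure
  set φ : ℝ → Euc n := phi n ℓ L μ c m₀ with hφdef
  have hφm : Measurable φ := measurable_phi n ℓ L μ m₀ hL hc0.le hℓ
  set ν : Measure (Euc n) := Measure.map φ ((volume : Measure ℝ).restrict (Set.Ico 0 c)) with hνdef
  have hν_apply : ∀ A : Set (Euc n), MeasurableSet A →
      ν A = volume (φ ⁻¹' A ∩ Set.Ico 0 c) := by
    intro A hA
    rw [hνdef, Measure.map_apply hφm hA, Measure.restrict_apply (hφm hA)]
  have hνuniv : ν Set.univ = ENNReal.ofReal c := by
    rw [hν_apply _ MeasurableSet.univ, Set.preimage_univ, Set.univ_inter, Real.volume_Ico,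
      sub_zero]
  -- support inclusion in closure of image
  have hsupp_sub : msupport ν ⊆ closure (φ '' Set.Ico 0 c) := by
    rw [hνdef]; exact msupport_map_subset hφm
  have himg : φ '' Set.Ico 0 c ⊆ msupport μ := by
    rintro x ⟨t, ht, rfl⟩
    intro U hUopen hxU
    obtain ⟨ε, hε, hball⟩ := Metric.isOpen_iff.1 hUopen _ hxU
    have hex : ∃ s : ℕ, Real.sqrt n * 2^(-(Tsc ℓ L s)) < ε := by
      obtain ⟨N, hN⟩ := exists_pow_lt_of_lt_one
        (x := ε / (Real.sqrt n * 2^(-(Tsc ℓ L 0)))) (by positivity)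
        (by norm_num : (1:ℝ)/2 < 1)
      refine ⟨N, ?_⟩
      have h1 : Tsc ℓ L 0 + (N:ℤ) ≤ Tsc ℓ L N := Tsc_lb ℓ L hL hℓ N
      have h2 : (2:ℝ)^(-(Tsc ℓ L N)) ≤ 2^(-(Tsc ℓ L 0) - (N:ℤ)) :=
        zpow_le_zpow_right₀ one_le_two (by omega)
      have h3 : (2:ℝ)^(-(Tsc ℓ L 0) - (N:ℤ)) = 2^(-(Tsc ℓ L 0)) * (1/2)^N := by
        rw [sub_eq_add_neg, zpow_add₀ (by norm_num : (2:ℝ) ≠ 0)]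
        congr 1
        rw [zpow_neg, ← zpow_natCast, one_div, inv_zpow]
      have h4 : (0:ℝ) < Real.sqrt n * 2^(-(Tsc ℓ L 0)) := by positivity
      calc Real.sqrt n * 2^(-(Tsc ℓ L N))
          ≤ Real.sqrt n * (2^(-(Tsc ℓ L 0)) * (1/2)^N) := by
            rw [← h3]; exact mul_le_mul_of_nonneg_left h2 hsq.le
        _ = (Real.sqrt n * 2^(-(Tsc ℓ L 0))) * (1/2)^N := by ring
        _ < (Real.sqrt n * 2^(-(Tsc ℓ L 0))) * (ε / (Real.sqrt n * 2^(-(Tsc ℓ L 0)))) :=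
            mul_lt_mul_of_pos_left hN h4
        _ = ε := by field_simp
    obtain ⟨s, hsε⟩ := hex
    have hxcube := phi_mem_cube n ℓ L μ m₀ hL hc0.le hℓ ht s
    have hcubeU : dyadicCube n (Tsc ℓ L s) (W n ℓ L μ c m₀ s t) ⊆ U := by
      intro y hy
      apply hball
      rw [Metric.mem_ball]
      calc dist y (φ t) ≤ Real.sqrt n * 2^(-(Tsc ℓ L s)) :=
            dist_le_of_mem_dyadic _ _ hy hxcube
        _ < ε := hsε
    have hppj := pp_pos_W n ℓ L μ m₀ hL hc0.le ht s
    have hinv := pp_le_inv n ℓ L μ m₀ hL hℓ hc0.le hcm s (W n ℓ L μ c m₀ s t)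
    have hmrepos : 0 < mre n μ (Tsc ℓ L s) (W n ℓ L μ c m₀ s t) := by
      by_contra hcon
      push_neg at hcon
      have := mre_nonneg n μ (Tsc ℓ L s) (W n ℓ L μ c m₀ s t)
      have hz : mre n μ (Tsc ℓ L s) (W n ℓ L μ c m₀ s t) = 0 := le_antisymm hcon this
      rw [hz, mul_zero] at hinv
      linarith
    have hμco : 0 < μ (co n (Tsc ℓ L s) (W n ℓ L μ c m₀ s t)) := by
      rw [pos_iff_ne_zero]
      intro hzz
      rw [mre, hzz] at hmrepos
      simp at hmrepos
    calc (0:ℝ≥0∞) < μ (co n (Tsc ℓ L s) (W n ℓ L μ c m₀ s t)) := hμco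
      _ ≤ μ U := measure_mono ((co_subset_dyadic _ _).trans hcubeU)
  refine ⟨ν, ?_, ?_, ?_, ?_, ?_⟩
  · -- nontrivial
    intro hzero
    have : ν Set.univ = 0 := by rw [hzero]; rfl
    rw [hνuniv, ENNReal.ofReal_eq_zero] at this
    linarith
  · -- finite
    exact ⟨by rw [hνuniv]; exact ENNReal.ofReal_lt_top⟩
  · -- Frostman bound
    rintro Q ⟨j, mQ, rfl⟩
    have hdiamge := diam_dyadic_ge (n := n) j mQ
    have hQmeas := measurableSet_dyadicCube (n := n) j mQ
    have htarget : ENNReal.ofReal ((Real.sqrt n * 2^(-j))^k)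
        ≤ ENNReal.ofReal (Metric.diam (dyadicCube n j mQ) ^ (k:ℝ)) := by
      apply ENNReal.ofReal_le_ofReal
      rw [Real.rpow_natCast]
      exact pow_le_pow_left₀ (by positivity) hdiamge k
    refine le_trans ?_ htarget
    rcases le_or_gt j (L 0) with hj | hj
    · have h1 : ν (dyadicCube n j mQ) ≤ ν Set.univ := measure_mono (Set.subset_univ _)
      rw [hνuniv] at h1
      refine h1.trans (ENNReal.ofReal_le_ofReal ?_)
      have h2 : c ≤ Cbig := min_le_right _ _
      refine h2.trans ?_
      rw [hCbig]
      apply pow_le_pow_left₀ (by positivity)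
      have h3 : (2:ℝ)^(-(L 0)) ≤ 2^(-j) := zpow_le_zpow_right₀ one_le_two (by omega)
      nlinarith [hsq.le]
    · -- fine scales
      have hPex : ∃ i : ℕ, j ≤ L (i+1) := by
        refine ⟨(j - L 0).toNat, ?_⟩
        have := hLlb ((j - L 0).toNat + 1)
        omega
      obtain ⟨i, hiP, hiLt⟩ : ∃ i : ℕ, j ≤ L (i+1) ∧ L i < j := by
        refine ⟨Nat.find hPex, Nat.find_spec hPex, ?_⟩
        rcases Nat.eq_zero_or_pos (Nat.find hPex) with h0 | h0
        · rw [h0]; exact hj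
        · have hmin := Nat.find_min hPex (m := Nat.find hPex - 1) (by omega)
          push_neg at hmin
          have hi1 : Nat.find hPex - 1 + 1 = Nat.find hPex := by omega
          rw [hi1] at hmin
          omega
      set s : ℕ := 2*(i+1) with hsdef
      have hevs : Even s := ⟨i+1, by omega⟩
      have hTs : Tsc ℓ L s = L (i+1) := by
        have hs2 : s/2 = i+1 := by omega
        rw [Tsc_even ℓ L hevs, hs2]
      have hTsj : j ≤ Tsc ℓ L s := by rw [hTs]; exact hiP
      set D : ℕ := (Tsc ℓ L s - j).toNat with hDdef
      have hjD : Tsc ℓ L s = j + (D:ℤ) := by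
        rw [hDdef, Int.toNat_of_nonneg (by omega)]
        ring
      set A : (Fin n → Fin 3) → (Fin n → ℤ) :=
        fun δ => fun i' => mQ i' + ((δ i' : ℕ) : ℤ) - 1 with hA
      -- covering
      have hcov : φ ⁻¹' (dyadicCube n j mQ) ∩ Set.Ico 0 c
          ⊆ ⋃ p : (Fin n → Fin 3) × (Fin n → Fin (2^D)),
              II n ℓ L μ c m₀ s (child (2^D) (A p.1) p.2) := by
        rintro t ⟨htQ, htc⟩
        have htII := W_mem n ℓ L μ m₀ hL hc0.le htc s
        have hx1 := phi_mem_cube n ℓ L μ m₀ hL hc0.le hℓ htc s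
        have hx2 : φ t ∈ dyadicCube n j mQ := htQ
        set m : Fin n → ℤ := W n ℓ L μ c m₀ s t with hmdef
        have hint : ∀ i', 2^D * mQ i' - 1 ≤ m i' ∧ m i' ≤ 2^D * (mQ i' + 1) := by
          intro i'
          obtain ⟨ha1, ha2⟩ := hx1 i'
          obtain ⟨hb1, hb2⟩ := hx2 i'
          have hTpos : (0:ℝ) < 2^(Tsc ℓ L s) := by positivity
          have einv : (2:ℝ)^(-(Tsc ℓ L s)) * 2^(Tsc ℓ L s) = 1 := by
            rw [← zpow_add₀ (by norm_num : (2:ℝ) ≠ 0)]; simp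
          have e2 : (2:ℝ)^(-j) * 2^(Tsc ℓ L s) = (2:ℝ)^(D:ℕ) := by
            rw [← zpow_add₀ (by norm_num : (2:ℝ) ≠ 0), ← zpow_natCast (2:ℝ) D]
            congr 1
            omega
          constructor
          · -- lower bound
            have step : ((mQ i' : ℝ)) * 2^(-j) * 2^(Tsc ℓ L s)
                ≤ ((m i' : ℝ) + 1) * 2^(-(Tsc ℓ L s)) * 2^(Tsc ℓ L s) :=
              mul_le_mul_of_nonneg_right (hb1.trans ha2) hTpos.le
            have lhs_eq : ((mQ i' : ℝ)) * 2^(-j) * 2^(Tsc ℓ L s)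
                = (mQ i' : ℝ) * 2^(D:ℕ) := by rw [mul_assoc, e2]
            have rhs_eq : ((m i' : ℝ) + 1) * 2^(-(Tsc ℓ L s)) * 2^(Tsc ℓ L s)
                = (m i' : ℝ) + 1 := by rw [mul_assoc, einv, mul_one]
            rw [lhs_eq, rhs_eq] at step
            have hcast : (2^D * mQ i' : ℤ) ≤ m i' + 1 := by
              have hr : ((2^D * mQ i' : ℤ) : ℝ) ≤ ((m i' + 1 : ℤ) : ℝ) := by
                push_cast
                nlinarith
              exact_mod_cast hr
            omega
          · have step : ((m i' : ℝ)) * 2^(-(Tsc ℓ L s)) * 2^(Tsc ℓ L s)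
                ≤ ((mQ i' : ℝ) + 1) * 2^(-j) * 2^(Tsc ℓ L s) :=
              mul_le_mul_of_nonneg_right (ha1.trans hb2) hTpos.le
            have lhs_eq : ((m i' : ℝ)) * 2^(-(Tsc ℓ L s)) * 2^(Tsc ℓ L s)
                = (m i' : ℝ) := by rw [mul_assoc, einv, mul_one]
            have rhs_eq : ((mQ i' : ℝ) + 1) * 2^(-j) * 2^(Tsc ℓ L s)
                = ((mQ i' : ℝ) + 1) * 2^(D:ℕ) := by rw [mul_assoc, e2]
            rw [lhs_eq, rhs_eq] at step
            have hr : ((m i' : ℤ) : ℝ) ≤ ((2^D * (mQ i' + 1) : ℤ) : ℝ) := by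
              push_cast
              nlinarith
            exact_mod_cast hr
        choose δfn efn heq using fun i' => int_decomp D (mQ i') (m i') (hint i').1 (hint i').2
        refine Set.mem_iUnion.2 ⟨(δfn, efn), ?_⟩
        have hch : child (2^D) (A δfn) efn = m := by
          funext i'
          have := heq i'
          simp only [child, hA]
          have hcast : ((2^D : ℕ) : ℤ) = 2^D := by push_cast; ring
          rw [hcast]
          omega
        rw [hch]
        exact htII
      -- volume estimate
      rw [hν_apply _ hQmeas]
      have hchain : volume (φ ⁻¹' (dyadicCube n j mQ) ∩ Set.Ico 0 c)
          ≤ ENNReal.ofReal (∑ p : (Fin n → Fin 3) × (Fin n → Fin (2^D)),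
              pp n ℓ L μ c m₀ s (child (2^D) (A p.1) p.2)) := by
        calc volume (φ ⁻¹' (dyadicCube n j mQ) ∩ Set.Ico 0 c)
            ≤ volume (⋃ p : (Fin n → Fin 3) × (Fin n → Fin (2^D)),
                II n ℓ L μ c m₀ s (child (2^D) (A p.1) p.2)) := measure_mono hcov
          _ ≤ ∑' p : (Fin n → Fin 3) × (Fin n → Fin (2^D)),
                volume (II n ℓ L μ c m₀ s (child (2^D) (A p.1) p.2)) := measure_iUnion_le _
          _ = ∑ p : (Fin n → Fin 3) × (Fin n → Fin (2^D)),
                volume (II n ℓ L μ c m₀ s (child (2^D) (A p.1) p.2)) := tsum_fintype _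
          _ = ∑ p : (Fin n → Fin 3) × (Fin n → Fin (2^D)),
                ENNReal.ofReal (pp n ℓ L μ c m₀ s (child (2^D) (A p.1) p.2)) := by
              refine Finset.sum_congr rfl (fun p _ => ?_)
              rw [II, Real.volume_Ico]
              congr 1
              ring
          _ = ENNReal.ofReal (∑ p : (Fin n → Fin 3) × (Fin n → Fin (2^D)),
                pp n ℓ L μ c m₀ s (child (2^D) (A p.1) p.2)) :=
              (ENNReal.ofReal_sum_of_nonneg
                (fun p _ => pp_nonneg n ℓ L μ m₀ hc0.le s _)).symm
      refine hchain.trans (ENNReal.ofReal_le_ofReal ?_)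
      -- real estimate
      have hsum1 : ∀ δ : Fin n → Fin 3,
          ∑ e : Fin n → Fin (2^D), pp n ℓ L μ c m₀ s (child (2^D) (A δ) e)
            ≤ Gf n ℓ s * mre n μ j (A δ) := by
        intro δ
        calc ∑ e : Fin n → Fin (2^D), pp n ℓ L μ c m₀ s (child (2^D) (A δ) e)
            ≤ ∑ e : Fin n → Fin (2^D),
                Gf n ℓ s * mre n μ (Tsc ℓ L s) (child (2^D) (A δ) e) :=
              Finset.sum_le_sum (fun e _ =>
                pp_le_inv n ℓ L μ m₀ hL hℓ hc0.le hcm s (child (2^D) (A δ) e))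
          _ = Gf n ℓ s * ∑ e : Fin n → Fin (2^D),
                mre n μ (Tsc ℓ L s) (child (2^D) (A δ) e) := by
              rw [Finset.mul_sum]
          _ = Gf n ℓ s * mre n μ j (A δ) := by
              congr 1
              simp only [hjD]
              exact (mre_add_gen μ j D (A δ)).symm
      have hmre_h : ∀ δ : Fin n → Fin 3,
          mre n μ j (A δ) ≤ h (Real.sqrt n * 2^(-j)) := by
        intro δ
        have h1 : μ (co n j (A δ)) ≤ ENNReal.ofReal (h (Metric.diam (dyadicCube n j (A δ)))) :=
          (measure_mono (co_subset_dyadic _ _)).trans (hfrost _ ⟨j, A δ, rfl⟩)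
        have hh0 : 0 ≤ h (Metric.diam (dyadicCube n j (A δ))) := by
          have := hmono (Metric.diam_nonneg (s := dyadicCube n j (A δ)))
          linarith [h0 ▸ this]
        have h2 : mre n μ j (A δ) ≤ h (Metric.diam (dyadicCube n j (A δ))) := by
          rw [mre]
          have h3 := ENNReal.toReal_mono ENNReal.ofReal_ne_top h1
          rwa [ENNReal.toReal_ofReal hh0] at h3
        exact h2.trans (hmono (diam_dyadic_le j (A δ)))
      have hGf : Gf n ℓ s = 2^(n*ℓ*(i+1)) := by
        have hs2 : (s+1)/2 = i+1 := by omega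
        rw [Gf, hs2]
      have hrpos : (0:ℝ) < Real.sqrt n * 2^(-j) := by positivity
      have hrδ : Real.sqrt n * 2^(-j) < δf i := by
        have h3 : (2:ℝ)^(-j) < 2^(-(L i)) := zpow_lt_zpow_right₀ one_lt_two (by omega)
        calc Real.sqrt n * 2^(-j) < Real.sqrt n * 2^(-(L i)) := by nlinarith
          _ < δf i := hLδ i
      have hh := hhf i _ hrpos hrδ
      have hone : (3:ℝ)^n * 2^(n*ℓ*(i+1)) * εf i = 1 := by
        rw [hεf]
        exact mul_inv_cancel₀ (by positivity)
      calc ∑ p : (Fin n → Fin 3) × (Fin n → Fin (2^D)),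
              pp n ℓ L μ c m₀ s (child (2^D) (A p.1) p.2)
          = ∑ δ : Fin n → Fin 3, ∑ e : Fin n → Fin (2^D),
              pp n ℓ L μ c m₀ s (child (2^D) (A δ) e) := Fintype.sum_prod_type _
        _ ≤ ∑ _δ : Fin n → Fin 3, Gf n ℓ s * h (Real.sqrt n * 2^(-j)) :=
            Finset.sum_le_sum (fun δ _ => (hsum1 δ).trans
              (mul_le_mul_of_nonneg_left (hmre_h δ) (Gf_pos n ℓ s).le))
        _ = (3:ℝ)^n * (Gf n ℓ s * h (Real.sqrt n * 2^(-j))) := by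
            rw [Finset.sum_const, Finset.card_univ, Fintype.card_fun, Fintype.card_fin,
              Fintype.card_fin, nsmul_eq_mul]
            push_cast
            ring
        _ = (3:ℝ)^n * 2^(n*ℓ*(i+1)) * h (Real.sqrt n * 2^(-j)) := by
            rw [hGf]; ring
        _ ≤ (3:ℝ)^n * 2^(n*ℓ*(i+1)) * (εf i * (Real.sqrt n * 2^(-j))^k) :=
            mul_le_mul_of_nonneg_left hh.le (by positivity)
        _ = ((3:ℝ)^n * 2^(n*ℓ*(i+1)) * εf i) * (Real.sqrt n * 2^(-j))^k := by ring
        _ = (Real.sqrt n * 2^(-j))^k := by rw [hone, one_mul]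
  · -- support
    refine hsupp_sub.trans ?_
    have := closure_minimal himg (isClosed_msupport μ)
    exact this
  · -- sparse
    refine ⟨L, ?_, ?_⟩
    · rw [Filter.tendsto_atTop]
      intro b
      rw [eventually_atTop]
      refine ⟨(b - L 0).toNat, fun j hj => ?_⟩
      have h1 := hLlb j
      have h2 : ((b - L 0).toNat : ℤ) ≤ (j:ℤ) := by exact_mod_cast hj
      omega
    · intro j
      have hev : Even (2*j) := ⟨j, by omega⟩
      have hdepj : dep ℓ L (2*j) = ℓ := dep_even ℓ L hℓ hev
      have hT2 : Tsc ℓ L (2*j+1) = L j + ℓ := by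
        have hodd : ¬ Even (2*j+1) := by simp [Nat.even_add_one, hev]
        rw [Tsc_odd ℓ L hodd]
        congr 2
        omega
      set sel : (Fin n → ℤ) → (Fin n → ℤ) :=
        fun m => child (Bb ℓ L (2*j)) m (chosenOff n ℓ L μ (2*j) m) with hsel
      have hselsub : ∀ m, dyadicCube n (L j + ℓ) (sel m) ⊆ dyadicCube n (L j) m := by
        intro m
        have hBd : Bb ℓ L (2*j) = 2^ℓ := by rw [Bb, hdepj]
        exact dyadic_child_subset (L j) ℓ hBd m _
      refine ⟨sel, hselsub, ?_⟩
      intro x hx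
      have hx1 := hsupp_sub hx
      have hclosed : IsClosed (⋃ m, dyadicCube n (L j + ℓ) (sel m)) :=
        LocallyFinite.isClosed_iUnion
          (locallyFinite_dyadic (L j) _ hselsub)
          (fun m => isClosed_dyadicCube _ _)
      refine closure_minimal ?_ hclosed hx1
      rintro y ⟨t, ht, rfl⟩
      have h1 := phi_mem_cube n ℓ L μ m₀ hL hc0.le hℓ ht (2*j+1)
      have h2 := W_odd_chosen n ℓ L μ m₀ hL hc0.le hℓ ht j
      rw [h2, hT2] at h1
      exact Set.mem_iUnion.2 ⟨W n ℓ L μ c m₀ (2*j) t, h1⟩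


/-- key lemma: if h is a gauge with h(r)/rᵏ → 0 and μ is a nontrivial
Radon measure with μ(Q) ≤ h(diam Q) for every dyadic cube, then for every positive
integer ℓ there is a nontrivial Radon measure ν with (a) ν(Q) ≤ (diam Q)ᵏ for all
dyadic cubes, (b) supp ν ⊆ supp μ, (c) supp ν is ℓ-sparse. -/
theorem stmt_9 (n k : ℕ) (hk : 1 ≤ k) (hkn : k < n)
    (h : ℝ → ℝ) (hcont : Continuous h) (hmono : Monotone h) (h0 : h 0 = 0)
    (hvanish : Tendsto (fun r => h r / r ^ (k:ℝ)) (nhdsWithin 0 (Set.Ioi 0)) (nhds 0))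
    (μ : Measure (Euc n)) (hμ : μ ≠ 0) [IsFiniteMeasure μ]
    (hfrost : ∀ Q : Set (Euc n), IsDyadic Q → μ Q ≤ ENNReal.ofReal (h (Metric.diam Q)))
    (ℓ : ℕ) (hℓ : 0 < ℓ) :
    ∃ ν : Measure (Euc n), ν ≠ 0 ∧ IsFiniteMeasure ν ∧
      (∀ Q : Set (Euc n), IsDyadic Q → ν Q ≤ ENNReal.ofReal (Metric.diam Q ^ (k:ℝ))) ∧
      msupport ν ⊆ msupport μ ∧
      IsSparse n ℓ (msupport ν) := by
  obtain ⟨ν, h1, h2, h3, h4, h5⟩ :=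
    stmt_9' n k hk hkn h hcont hmono h0 hvanish μ hμ (fun Q hQ => hfrost Q hQ) ℓ hℓ
  exact ⟨ν, h1, h2, fun Q hQ => h3 Q hQ, h4, h5⟩
end
end

section
/- In the inductive construction of the sparse measure: let ν_{j−1} be a probability measure on [0,1]ⁿ with ν_{j−1}(∂Q) = 0 for all dyadic cubes Q, let l_j ∈ ℕ, and for each dyadic cube Q of side length 2^(−l_j) with ν_{j−1}(Q) > 0 choose a dyadic subcube Q' ⊂ Q of side length 2^(−l_j−ℓ) with ν_{j−1}(Q') ≥ 2^(−nℓ) ν_{j−1}(Q). Define ν_j restricted to Q as (ν_{j−1}(Q)/ν_{j−1}(Q')) · ν_{j−1}⌞Q'. Then ν_j is a probability measure, ν_j(Q) = ν_{j−1}(Q) for all dyadic cubes Q of side length 2^(−l_j), and ν_j(R) ≤ 2^(nℓ) ν_{j−1}(R) for every dyadic cube R of side length at most 2^(−l_j). -/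
open MeasureTheory Metric Set Filter
open scoped NNReal ENNReal

noncomputable section

lemma isClosed_dyadicCube (n : ℕ) (j : ℤ) (m : Fin n → ℤ) :
    IsClosed (dyadicCube n j m) := by
  have : dyadicCube n j m =
      ⋂ i, (EuclideanSpace.proj (𝕜 := ℝ) i) ⁻¹'
        Icc ((m i : ℝ) * 2 ^ (-j)) (((m i : ℝ) + 1) * 2 ^ (-j)) := by
    ext x
    simp [dyadicCube, Set.mem_iInter, Set.mem_Icc]
  rw [this]
  exact isClosed_iInter fun i =>
    IsClosed.preimage (EuclideanSpace.proj i).continuous isClosed_Icc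

lemma measurableSet_dyadicCube (n : ℕ) (j : ℤ) (m : Fin n → ℤ) :
    MeasurableSet (dyadicCube n j m) :=
  (isClosed_dyadicCube n j m).measurableSet

lemma mem_frontier_dyadicCube (n : ℕ) (j : ℤ) (m : Fin n → ℤ) {x : Euc n}
    (hx : x ∈ dyadicCube n j m) (i : Fin n)
    (h : x i = (m i : ℝ) * 2 ^ (-j) ∨ x i = ((m i : ℝ) + 1) * 2 ^ (-j)) :
    x ∈ frontier (dyadicCube n j m) := by
  rw [(isClosed_dyadicCube n j m).frontier_eq]
  refine ⟨hx, fun hint => ?_⟩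
  obtain ⟨ε, hε, hball⟩ := Metric.isOpen_iff.mp isOpen_interior x hint
  rcases h with h | h
  · set y : Euc n := x + EuclideanSpace.single i (-(ε/2)) with hy
    have hyball : y ∈ ball x ε := by
      rw [mem_ball, dist_comm, dist_self_add_right, EuclideanSpace.norm_single]
      simp [abs_of_pos, hε]
    have hyQ : y ∈ dyadicCube n j m := interior_subset (hball hyball)
    have h1 := (hyQ i).1
    have h2 : y i = x i - ε/2 := by
      simp [hy, EuclideanSpace.single_apply]
      ring
    rw [h2, h] at h1
    linarith
  · set y : Euc n := x + EuclideanSpace.single i (ε/2) with hy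
    have hyball : y ∈ ball x ε := by
      rw [mem_ball, dist_comm, dist_self_add_right, EuclideanSpace.norm_single]
      simp [abs_of_pos, hε]
    have hyQ : y ∈ dyadicCube n j m := interior_subset (hball hyball)
    have h1 := (hyQ i).2
    have h2 : y i = x i + ε/2 := by
      simp [hy, EuclideanSpace.single_apply]
    rw [h2, h] at h1
    linarith

lemma inter_subset_frontier_dyadicCube (n : ℕ) (j : ℤ) {m m' : Fin n → ℤ}
    (h : m ≠ m') :
    dyadicCube n j m ∩ dyadicCube n j m' ⊆ frontier (dyadicCube n j m) := by
  rintro x ⟨hx, hx'⟩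
  obtain ⟨i, hi⟩ := Function.ne_iff.mp h
  have hp : (0:ℝ) < 2 ^ (-j) := by positivity
  refine mem_frontier_dyadicCube n j m hx i ?_
  rcases lt_or_gt_of_ne hi with hlt | hlt
  · right
    have h1 := (hx i).2
    have h2 := (hx' i).1
    have h3 : ((m i : ℝ) + 1) ≤ (m' i : ℝ) := by exact_mod_cast hlt
    have h4 : ((m i : ℝ) + 1) * 2 ^ (-j) ≤ (m' i : ℝ) * 2 ^ (-j) :=
      mul_le_mul_of_nonneg_right h3 hp.le
    linarith
  · left
    have h1 := (hx i).1
    have h2 := (hx' i).2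
    have h3 : ((m' i : ℝ) + 1) ≤ (m i : ℝ) := by exact_mod_cast hlt
    have h4 : ((m' i : ℝ) + 1) * 2 ^ (-j) ≤ (m i : ℝ) * 2 ^ (-j) :=
      mul_le_mul_of_nonneg_right h3 hp.le
    linarith

lemma dyadicCube_nested (n : ℕ) (lj j' : ℤ) (h : lj ≤ j') (m : Fin n → ℤ) :
    dyadicCube n j' m ⊆
      dyadicCube n lj (fun i => m i / 2 ^ (j' - lj).toNat) := by
  intro x hx i
  set k := (j' - lj).toNat with hk
  have hkj : j' = lj + (k : ℤ) := by omega
  set q : ℤ := m i / 2 ^ k with hq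
  have h2k : (0:ℤ) < 2 ^ k := by positivity
  have hmod1 : 0 ≤ m i % 2 ^ k := Int.emod_nonneg _ h2k.ne'
  have hmod2 : m i % 2 ^ k < 2 ^ k := Int.emod_lt_of_pos _ h2k
  have heq : 2 ^ k * q + m i % 2 ^ k = m i := by
    rw [hq]; exact Int.mul_ediv_add_emod (m i) (2 ^ k)
  have hdiv1 : 2 ^ k * q ≤ m i := by linarith
  have hdiv2 : m i < 2 ^ k * q + 2 ^ k := by linarith
  have hpow : (2:ℝ) ^ (-lj) = (2:ℝ) ^ (k:ℤ) * 2 ^ (-j') := by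
    rw [← zpow_add₀ (by norm_num : (2:ℝ) ≠ 0)]
    congr 1; omega
  have hpj : (0:ℝ) < 2 ^ (-j') := by positivity
  have hr1 : ((2:ℝ) ^ k * q : ℝ) ≤ (m i : ℝ) := by exact_mod_cast hdiv1
  have hr2 : ((m i : ℝ) + 1) ≤ (2:ℝ) ^ k * (q + 1) := by
    have : m i + 1 ≤ 2 ^ k * (q + 1) := by linarith
    exact_mod_cast this
  constructor
  · calc (q : ℝ) * 2 ^ (-lj) = (2:ℝ) ^ k * q * 2 ^ (-j') := by
          rw [hpow]; simp only [zpow_natCast]; push_cast; ring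
    _ ≤ (m i : ℝ) * 2 ^ (-j') := mul_le_mul_of_nonneg_right hr1 hpj.le
    _ ≤ x i := (hx i).1
  · calc x i ≤ ((m i : ℝ) + 1) * 2 ^ (-j') := (hx i).2
    _ ≤ (2:ℝ) ^ k * (q + 1) * 2 ^ (-j') := mul_le_mul_of_nonneg_right hr2 hpj.le
    _ = ((q:ℝ) + 1) * 2 ^ (-lj) := by rw [hpow]; simp only [zpow_natCast]; push_cast; ring

lemma iUnion_dyadicCube (n : ℕ) (j : ℤ) :
    (⋃ m : Fin n → ℤ, dyadicCube n j m) = univ := by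
  ext x
  simp only [mem_iUnion, mem_univ, iff_true]
  refine ⟨fun i => ⌊x i * 2 ^ j⌋, fun i => ?_⟩
  have hp : (0:ℝ) < 2 ^ (-j : ℤ) := by positivity
  have hpp : (0:ℝ) < 2 ^ (j : ℤ) := by positivity
  have he : (2:ℝ) ^ (j:ℤ) * 2 ^ (-j:ℤ) = 1 := by
    rw [← zpow_add₀ (by norm_num : (2:ℝ) ≠ 0)]; simp
  have h1 : (⌊x i * 2 ^ j⌋ : ℝ) ≤ x i * 2 ^ j := Int.floor_le _
  have h2 : x i * 2 ^ j < ⌊x i * 2 ^ j⌋ + 1 := Int.lt_floor_add_one _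
  constructor
  · have := mul_le_mul_of_nonneg_right h1 hp.le
    calc (⌊x i * 2 ^ j⌋ : ℝ) * 2 ^ (-j) ≤ x i * 2 ^ j * 2 ^ (-j) := this
    _ = x i := by rw [mul_assoc, he, mul_one]
  · have := mul_le_mul_of_nonneg_right h2.le hp.le
    calc x i = x i * 2 ^ j * 2 ^ (-j) := by rw [mul_assoc, he, mul_one]
    _ ≤ ((⌊x i * 2 ^ j⌋ : ℝ) + 1) * 2 ^ (-j) := this

lemma measure_dyadicCube_eq_interior {n : ℕ} (ν : Measure (Euc n))
    (hbd : ∀ Q : Set (Euc n), IsDyadic Q → ν (frontier Q) = 0)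
    (j : ℤ) (m : Fin n → ℤ) :
    ν (dyadicCube n j m) = ν (interior (dyadicCube n j m)) := by
  refine le_antisymm ?_ (measure_mono interior_subset)
  have hsub : dyadicCube n j m ⊆
      interior (dyadicCube n j m) ∪ frontier (dyadicCube n j m) := by
    intro x hx
    by_cases h : x ∈ interior (dyadicCube n j m)
    · exact Or.inl h
    · exact Or.inr (by
        rw [(isClosed_dyadicCube n j m).frontier_eq]; exact ⟨hx, h⟩)
  calc ν (dyadicCube n j m) ≤ ν (interior (dyadicCube n j m)) +
        ν (frontier (dyadicCube n j m)) :=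
      le_trans (measure_mono hsub) (measure_union_le _ _)
  _ = ν (interior (dyadicCube n j m)) := by
      rw [hbd _ ⟨j, m, rfl⟩, add_zero]

lemma tsum_measure_dyadicCube {n : ℕ} (ν : Measure (Euc n))
    [IsProbabilityMeasure ν]
    (hbd : ∀ Q : Set (Euc n), IsDyadic Q → ν (frontier Q) = 0) (j : ℤ) :
    ∑' m : Fin n → ℤ, ν (dyadicCube n j m) = 1 := by
  refine le_antisymm ?_ ?_
  · have heq : ∀ m : Fin n → ℤ, ν (dyadicCube n j m)
        = ν (interior (dyadicCube n j m)) :=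
      measure_dyadicCube_eq_interior ν hbd j
    calc ∑' m : Fin n → ℤ, ν (dyadicCube n j m)
        = ∑' m : Fin n → ℤ, ν (interior (dyadicCube n j m)) := by
          exact tsum_congr heq
    _ = ν (⋃ m : Fin n → ℤ, interior (dyadicCube n j m)) := by
          refine (measure_iUnion ?_ fun m => isOpen_interior.measurableSet).symm
          intro a b hab
          refine Set.disjoint_left.mpr fun x hxa hxb => ?_
          have hfr : x ∈ frontier (dyadicCube n j a) :=
            inter_subset_frontier_dyadicCube n j hab
              ⟨interior_subset hxa, interior_subset hxb⟩
          rw [(isClosed_dyadicCube n j a).frontier_eq] at hfr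
          exact hfr.2 hxa
    _ ≤ 1 := prob_le_one
  · calc (1:ℝ≥0∞) = ν univ := (measure_univ).symm
    _ = ν (⋃ m : Fin n → ℤ, dyadicCube n j m) := by rw [iUnion_dyadicCube]
    _ ≤ ∑' m : Fin n → ℤ, ν (dyadicCube n j m) := measure_iUnion_le _

/-- inductive step of the sparse-measure construction: if ν is a
probability measure on [0,1]ⁿ giving zero mass to boundaries of dyadic cubes, and for
each dyadic cube Q of scale l_j with ν(Q) > 0 a subcube Q' of scale l_j + ℓ is chosen
with ν(Q') ≥ 2^(-nℓ) ν(Q), then the measure ν' defined on each Q as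
(ν(Q)/ν(Q'))·ν⌞Q' is a probability measure, agrees with ν on dyadic cubes of scale
l_j, and satisfies ν'(R) ≤ 2^(nℓ) ν(R) for every dyadic cube R of scale ≥ l_j. -/
theorem stmt_10 (n : ℕ) (hn : 0 < n) (ℓ : ℕ) (hℓ : 0 < ℓ) (lj : ℤ)
    (ν : Measure (Euc n)) [IsProbabilityMeasure ν]
    (hcube : ν {x : Euc n | ∀ i, x i ∈ Set.Icc (0:ℝ) 1}ᶜ = 0)
    (hbd : ∀ Q : Set (Euc n), IsDyadic Q → ν (frontier Q) = 0)
    (sel : (Fin n → ℤ) → (Fin n → ℤ))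
    (hsel : ∀ m : Fin n → ℤ, 0 < ν (dyadicCube n lj m) →
      dyadicCube n (lj + ℓ) (sel m) ⊆ dyadicCube n lj m ∧
      ν (dyadicCube n lj m) ≤ 2 ^ (n * ℓ) * ν (dyadicCube n (lj + ℓ) (sel m)))
    (ν' : Measure (Euc n))
    (hν' : ν' = Measure.sum fun m : Fin n → ℤ =>
      (ν (dyadicCube n lj m) / ν (dyadicCube n (lj + ℓ) (sel m))) •
        ν.restrict (dyadicCube n (lj + ℓ) (sel m))) :
    IsProbabilityMeasure ν' ∧
      (∀ m : Fin n → ℤ, ν' (dyadicCube n lj m) = ν (dyadicCube n lj m)) ∧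
      (∀ (j' : ℤ), lj ≤ j' → ∀ m : Fin n → ℤ,
        ν' (dyadicCube n j' m) ≤ 2 ^ (n * ℓ) * ν (dyadicCube n j' m)) := by
  set Q : (Fin n → ℤ) → Set (Euc n) := fun m => dyadicCube n lj m with hQ
  set Q' : (Fin n → ℤ) → Set (Euc n) := fun m => dyadicCube n (lj + ℓ) (sel m)
    with hQ'
  set r : (Fin n → ℤ) → ℝ≥0∞ := fun m => ν (Q m) / ν (Q' m) with hr
  -- if ν(Q m) ≠ 0 then ν(Q' m) ≠ 0
  have hQ'pos : ∀ m, ν (Q m) ≠ 0 → ν (Q' m) ≠ 0 := by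
    intro m hm h0
    have := (hsel m (pos_iff_ne_zero.mpr hm)).2
    rw [h0, mul_zero] at this
    exact hm (le_antisymm this zero_le)
  -- how ν' evaluates on measurable sets
  have happly : ∀ S : Set (Euc n), MeasurableSet S →
      ν' S = ∑' m : Fin n → ℤ, r m * ν (S ∩ Q' m) := by
    intro S hS
    rw [hν', Measure.sum_apply _ hS]
    refine tsum_congr fun m => ?_
    rw [Measure.smul_apply, Measure.restrict_apply hS, smul_eq_mul]
  -- total mass of each piece
  have hmass : ∀ m, r m * ν (Q' m) = ν (Q m) := by
    intro m
    by_cases hm : ν (Q m) = 0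
    · rw [hm, hr]; simp [hm]
    · exact ENNReal.div_mul_cancel (hQ'pos m hm) (measure_ne_top ν _)
  -- zero cross-terms: if m' ≠ m, the piece at m' gives no mass to Q m
  have hcross : ∀ m m' : Fin n → ℤ, m' ≠ m → r m' * ν (Q m ∩ Q' m') = 0 := by
    intro m m' hne
    by_cases hm' : ν (Q m') = 0
    · rw [hr]; simp [hm']
    · have hsub : Q m ∩ Q' m' ⊆ frontier (Q m') := by
        refine subset_trans ?_ (inter_subset_frontier_dyadicCube n lj hne)
        exact fun x hx => ⟨(hsel m' (pos_iff_ne_zero.mpr hm')).1 hx.2, hx.1⟩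
      have : ν (Q m ∩ Q' m') = 0 :=
        measure_mono_null hsub (hbd _ ⟨lj, m', rfl⟩)
      rw [this, mul_zero]
  refine ⟨?_, ?_, ?_⟩
  · -- probability measure
    constructor
    rw [happly univ MeasurableSet.univ]
    calc ∑' m : Fin n → ℤ, r m * ν (univ ∩ Q' m)
        = ∑' m : Fin n → ℤ, ν (Q m) := by
          refine tsum_congr fun m => ?_
          rw [univ_inter]; exact hmass m
    _ = 1 := tsum_measure_dyadicCube ν hbd lj
  · -- agrees on scale-lj cubes
    intro m
    rw [happly (Q m) (measurableSet_dyadicCube n lj m)]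
    rw [tsum_eq_single m (fun m' hne => hcross m m' hne)]
    by_cases hm : ν (Q m) = 0
    · rw [hm, hr]; simp [hm]
    · have hsub : Q' m ⊆ Q m := (hsel m (pos_iff_ne_zero.mpr hm)).1
      rw [inter_eq_self_of_subset_right hsub]
      exact hmass m
  · -- domination at finer scales
    intro j' hj' m
    set m1 : Fin n → ℤ := fun i => m i / 2 ^ (j' - lj).toNat with hm1
    have hRsub : dyadicCube n j' m ⊆ Q m1 := dyadicCube_nested n lj j' hj' m
    rw [happly (dyadicCube n j' m) (measurableSet_dyadicCube n j' m)]
    have hzero : ∀ m' : Fin n → ℤ, m' ≠ m1 →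
        r m' * ν (dyadicCube n j' m ∩ Q' m') = 0 := by
      intro m' hne
      have h0 := hcross m1 m' hne
      by_cases hm' : ν (Q m') = 0
      · rw [hr]; simp [hm']
      · have h1 : ν (Q m1 ∩ Q' m') = 0 := by
          have hsub : Q m1 ∩ Q' m' ⊆ frontier (Q m') := by
            refine subset_trans ?_ (inter_subset_frontier_dyadicCube n lj hne)
            exact fun x hx => ⟨(hsel m' (pos_iff_ne_zero.mpr hm')).1 hx.2, hx.1⟩
          exact measure_mono_null hsub (hbd _ ⟨lj, m', rfl⟩)
        have h2 : ν (dyadicCube n j' m ∩ Q' m') = 0 :=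
          measure_mono_null (Set.inter_subset_inter_left _ hRsub) h1
        rw [h2, mul_zero]
    rw [tsum_eq_single m1 hzero]
    by_cases hm1z : ν (Q m1) = 0
    · rw [hr]; simp [hm1z]
    · have hrle : r m1 ≤ 2 ^ (n * ℓ) :=
        ENNReal.div_le_of_le_mul (hsel m1 (pos_iff_ne_zero.mpr hm1z)).2
      calc r m1 * ν (dyadicCube n j' m ∩ Q' m1)
          ≤ 2 ^ (n * ℓ) * ν (dyadicCube n j' m) :=
            mul_le_mul' hrle (measure_mono inter_subset_left)
end
end
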